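/- arXiv:0912.4653 — 6 statements merged into one kernel-verified Lean document; each statement's English description precedes it below -/
import Mathlib

section
/- Let s(x,y) = y - y² + x² on ℝ². For every point (a,b) with s(a,b) = 0 and b < 1, and every tangent vector ξ = (ξ₁, ξ₂) satisfying 2aξ₁ + (1-2b)ξ₂ = 0, one has H_s(ξ,ξ)(a,b) = 2(ξ₁² - ξ₂²) ≥ 0. However, s is not convex in any neighborhood of the origin: for every ε > 0 there is a point p with ‖p‖ < ε and a direction ξ with H_s(ξ,ξ)(p) < 0. -/
open RealInnerProductSpace Metric Bornology

noncomputable abbrev E (n : ℕ) := EuclideanSpace ℝ (Fin n)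

/-- The real Hessian bilinear form `H_f(ξ,ζ)(x)` of a function `f` at `x`. -/
noncomputable def Hess {F : Type*} [NormedAddCommGroup F] [NormedSpace ℝ F]
    (f : F → ℝ) (x ξ ζ : F) : ℝ :=
  fderiv ℝ (fun y => fderiv ℝ f y ζ) x ξ

noncomputable def s : E 2 → ℝ := fun p => p 1 - (p 1) ^ 2 + (p 0) ^ 2

/-
`s` is a quadratic polynomial, so its Hessian is the constant indefinite form
`2(ξ₁² - ξ₂²)`, negative in the direction `(0, 1)` at every point. At a point `(a, b)` of
`{s = 0}` the identity `(1 - 2b)² = 1 + 4a²` turns the tangency condition into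
`(1 + 4a²) ξ₂² = 4a² ξ₁²`, which forces `ξ₂² ≤ ξ₁²`.
-/

section QuadraticPolynomial

variable {F : Type*} [NormedAddCommGroup F] [NormedSpace ℝ F]
  (ℓ : F →L[ℝ] ℝ) (B : F →L[ℝ] F →L[ℝ] ℝ)

theorem fderiv_linear_add_bilinear_apply (y ζ : F) :
    fderiv ℝ (fun y => ℓ y + B y y) y ζ = ℓ ζ + B y ζ + B ζ y := by
  have hB := B.hasFDerivAt_of_bilinear (hasFDerivAt_id y) (hasFDerivAt_id y)
  rw [HasFDerivAt.fderiv (f := fun y => ℓ y + B y y) (ℓ.hasFDerivAt.add hB)]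
  simp only [id_eq, ContinuousLinearMap.precompR_apply, ContinuousLinearMap.compL_apply,
    ContinuousLinearMap.comp_id, add_apply, ContinuousLinearMap.precompL_apply,
    ContinuousLinearMap.id_apply]
  ring

theorem hess_linear_add_bilinear (x ξ ζ : F) :
    Hess (fun y => ℓ y + B y y) x ξ ζ = B ξ ζ + B ζ ξ := by
  have h : (fun y => fderiv ℝ (fun y => ℓ y + B y y) y ζ) =
      fun y => ℓ ζ + (B.flip ζ + B ζ) y := by
    funext y
    rw [fderiv_linear_add_bilinear_apply]
    simp only [add_apply, ContinuousLinearMap.flip_apply]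
    ring
  rw [Hess, h, fderiv_const_add, ((B.flip ζ + B ζ).fderiv)]
  simp only [add_apply, ContinuousLinearMap.flip_apply, add_comm]

end QuadraticPolynomial

theorem s_eq_linear_add_bilinear :
    s = fun y : E 2 => EuclideanSpace.proj 1 y +
      ((EuclideanSpace.proj 0).smulRight (EuclideanSpace.proj 0) -
        (EuclideanSpace.proj 1).smulRight (EuclideanSpace.proj 1) : E 2 →L[ℝ] E 2 →L[ℝ] ℝ) y y := by
  funext y
  simp only [s, Fin.isValue, PiLp.proj_apply, sub_apply, ContinuousLinearMap.smulRight_apply,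
    smul_apply, smul_eq_mul]
  ring

theorem hess_s (x ξ ζ : E 2) : Hess s x ξ ζ = 2 * (ξ 0 * ζ 0 - ξ 1 * ζ 1) := by
  rw [s_eq_linear_add_bilinear, hess_linear_add_bilinear]
  simp only [Fin.isValue, sub_apply, ContinuousLinearMap.smulRight_apply, PiLp.proj_apply,
    smul_apply, smul_eq_mul]
  ring

theorem sq_le_sq_of_tangent {a b u v : ℝ} (hs : b - b ^ 2 + a ^ 2 = 0)
    (ht : 2 * a * u + (1 - 2 * b) * v = 0) : v ^ 2 ≤ u ^ 2 := by
  have h : (1 + 4 * a ^ 2) * v ^ 2 = 4 * a ^ 2 * u ^ 2 := by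
    linear_combination ((1 - 2 * b) * v - 2 * a * u) * ht + 4 * v ^ 2 * hs
  nlinarith [sq_nonneg v, sq_nonneg (a * v)]

/-- `s(x,y) = y - y² + x²` has nonnegative Hessian in tangential directions
at every boundary point `(a,b)` with `b < 1`, yet `s` is not convex in any
neighborhood of the origin. -/
theorem example_nonconvex_defining_function :
    (∀ p : E 2, s p = 0 → p 1 < 1 →
      ∀ ξ : E 2, 2 * p 0 * ξ 0 + (1 - 2 * p 1) * ξ 1 = 0 →
        Hess s p ξ ξ = 2 * ((ξ 0) ^ 2 - (ξ 1) ^ 2) ∧ 0 ≤ Hess s p ξ ξ) ∧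
    (∀ ε > (0:ℝ), ∃ p : E 2, ‖p‖ < ε ∧ ∃ ξ : E 2, Hess s p ξ ξ < 0) := by
  constructor
  · intro p hs _ ξ htan
    have hH : Hess s p ξ ξ = 2 * ((ξ 0) ^ 2 - (ξ 1) ^ 2) := by rw [hess_s]; ring
    have hle := sq_le_sq_of_tangent hs htan
    exact ⟨hH, by rw [hH]; linarith⟩
  · intro ε hε
    refine ⟨0, by simpa using hε, EuclideanSpace.single 1 1, ?_⟩
    rw [hess_s]
    simp
end

section
/- Let Ω ⊂ ℝⁿ be a smoothly bounded convex domain and p ∈ bΩ. Then there exist a neighborhood V of p and a smooth local defining function ρ for Ω on V such that H_ρ(ξ,ξ)(x) ≥ 0 for all x ∈ V and all ξ ∈ ℝⁿ. -/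
open RealInnerProductSpace Metric Bornology

open Filter Topology

lemma inner_grad {n : ℕ} (f : E n → ℝ) (x y : E n) :
    ⟪gradient f x, y⟫ = fderiv ℝ f x y := by
  rw [gradient, InnerProductSpace.toDual_symm_apply]

lemma mem_frontier_of_zero {n : ℕ} {r : E n → ℝ} (hr : Differentiable ℝ r)
    {Ω : Set (E n)} (hdef : Ω = {x | r x < 0}) {z : E n} (hz : r z = 0)
    (hg : gradient r z ≠ 0) : z ∈ frontier Ω := by
  have hΩopen : IsOpen Ω := by
    rw [hdef]; exact isOpen_lt (hr.continuous) continuous_const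
  have hcl : z ∈ closure Ω := by
    set g := gradient r z with hgdef
    have hgn : (0:ℝ) < ‖g‖ := norm_pos_iff.mpr hg
    have hψ : HasDerivAt (fun t : ℝ => r (z - t • g)) (-‖g‖ ^ 2) 0 := by
      have hline : HasDerivAt (fun t : ℝ => z - t • g) (-g) 0 := by
        simpa using ((hasDerivAt_id (0:ℝ)).smul_const g).const_sub z
      have hr' : HasFDerivAt r (fderiv ℝ r z) ((fun t : ℝ => z - t • g) 0) := by
        simpa using (hr z).hasFDerivAt
      have hcomp := hr'.comp_hasDerivAt 0 hline
      have h2 : fderiv ℝ r z (-g) = -‖g‖ ^ 2 := by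
        rw [map_neg, ← inner_grad, real_inner_self_eq_norm_sq]
      simpa [Function.comp_def, h2] using hcomp
    have hslope : Tendsto (slope (fun t : ℝ => r (z - t • g)) 0) (𝓝[≠] 0) (𝓝 (-‖g‖^2)) := by
      simpa using hasDerivAt_iff_tendsto_slope.mp hψ
    have hneg : ∀ᶠ t in 𝓝[>] (0:ℝ), r (z - t • g) < 0 := by
      have h1 : ∀ᶠ t in 𝓝[≠] (0:ℝ), slope (fun t : ℝ => r (z - t • g)) 0 t < 0 :=
        hslope.eventually_lt_const (by nlinarith)
      have h2 : ∀ᶠ t in 𝓝[>] (0:ℝ), slope (fun t : ℝ => r (z - t • g)) 0 t < 0 :=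
        Filter.Eventually.filter_mono
          (nhdsWithin_mono 0 (fun t (ht : t ∈ Set.Ioi 0) =>
            Set.mem_compl_singleton_iff.mpr (ne_of_gt ht))) h1
      filter_upwards [h2, self_mem_nhdsWithin] with t ht ht'
      have ht0 : (0:ℝ) < t := ht'
      rw [slope_def_field] at ht
      simp only [zero_smul, sub_zero, hz] at ht
      rcases (div_neg_iff).mp ht with ⟨h,_⟩|⟨_,hh⟩
      · linarith
      · linarith
    have hc : Continuous (fun t : ℝ => z - t • g) :=
      continuous_const.sub (continuous_id.smul continuous_const)
    have htend : Tendsto (fun t : ℝ => z - t • g) (𝓝[>] 0) (𝓝 z) := by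
      have h0 : Tendsto (fun t : ℝ => z - t • g) (𝓝 0) (𝓝 (z - (0:ℝ) • g)) := hc.tendsto 0
      simp only [zero_smul, sub_zero] at h0
      exact h0.mono_left nhdsWithin_le_nhds
    apply mem_closure_of_tendsto htend
    filter_upwards [hneg] with t ht
    rw [hdef]; exact ht
  have hnot : z ∉ Ω := by rw [hdef]; simp [hz]
  rw [frontier, hΩopen.interior_eq]
  exact ⟨hcl, hnot⟩

section setup
variable {n : ℕ} (ν : E n)

/-- orthogonal projection onto the complement of ν -/
noncomputable def Pperp : E n →L[ℝ] E n :=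
  ContinuousLinearMap.id ℝ (E n) - (innerSL ℝ ν).smulRight ν

lemma Pperp_apply (x : E n) : Pperp ν x = x - ⟪ν, x⟫ • ν := rfl

variable (hν : ‖ν‖ = 1)
include hν

lemma inner_nu_nu : ⟪ν, ν⟫ = 1 := by
  rw [real_inner_self_eq_norm_sq, hν]; norm_num

lemma Pperp_nu : Pperp ν ν = 0 := by
  rw [Pperp_apply, inner_nu_nu ν hν, one_smul, sub_self]

lemma inner_Pperp (x : E n) : ⟪ν, Pperp ν x⟫ = 0 := by
  rw [Pperp_apply, inner_sub_right, real_inner_smul_right, inner_nu_nu ν hν]; ring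

omit hν in
lemma Pperp_decomp (x : E n) : Pperp ν x + ⟪ν, x⟫ • ν = x := by
  rw [Pperp_apply]; abel

/-- the derivative of Φ at a point, as a linear map -/
noncomputable def DPhi (G : E n →L[ℝ] ℝ) : E n →L[ℝ] E n :=
  Pperp ν + G.smulRight ν

omit hν in
lemma DPhi_apply (G : E n →L[ℝ] ℝ) (x : E n) : DPhi ν G x = Pperp ν x + G x • ν := rfl

lemma DPhi_injective (G : E n →L[ℝ] ℝ) (hG : G ν ≠ 0) :
    Function.Injective (DPhi ν G) := by
  intro a b hab
  have hξ : DPhi ν G (a - b) = 0 := by rw [map_sub, hab, sub_self]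
  set ξ := a - b with hξdef
  have h1 : G ξ = 0 := by
    have h := congrArg (fun y => ⟪ν, y⟫) hξ
    simp only [DPhi_apply] at h
    rw [inner_add_right, real_inner_smul_right, inner_Pperp ν hν, inner_nu_nu ν hν,
      inner_zero_right, zero_add, mul_one] at h
    exact h
  have h2 : ξ = ⟪ν, ξ⟫ • ν := by
    have h3 : Pperp ν ξ = 0 := by
      have : Pperp ν ξ + G ξ • ν = 0 := hξ
      simpa [h1] using this
    have h5 := Pperp_decomp ν ξ
    rw [h3, zero_add] at h5
    exact h5.symm
  have h4 : ⟪ν, ξ⟫ = 0 := by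
    have h6 : G ξ = ⟪ν, ξ⟫ * G ν := by
      conv_lhs => rw [h2]
      rw [map_smul, smul_eq_mul]
    rw [h1] at h6
    rcases mul_eq_zero.mp h6.symm with h|h
    · exact h
    · exact absurd h hG
  have : ξ = 0 := by rw [h2, h4, zero_smul]
  exact sub_eq_zero.mp this

lemma DPhi_bijective (G : E n →L[ℝ] ℝ) (hG : G ν ≠ 0) :
    Function.Bijective (DPhi ν G) := by
  have hinj := DPhi_injective ν hν G hG
  exact ⟨hinj, (LinearMap.injective_iff_surjective (f := (DPhi ν G).toLinearMap)).mp hinj⟩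

/-- derivative as a continuous linear equiv -/
noncomputable def DPhiEquiv (G : E n →L[ℝ] ℝ) (hG : G ν ≠ 0) : E n ≃L[ℝ] E n :=
  (LinearEquiv.ofBijective (DPhi ν G).toLinearMap (DPhi_bijective ν hν G hG)).toContinuousLinearEquiv

lemma DPhiEquiv_coe (G : E n →L[ℝ] ℝ) (hG : G ν ≠ 0) :
    (DPhiEquiv ν hν G hG : E n →L[ℝ] E n) = DPhi ν G := by
  ext x
  rfl

end setup
set_option maxHeartbeats 2000000 in
/-- a smoothly bounded convex domain admits, near each boundary point,
a smooth local defining function which is convex on a full neighborhood. -/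
theorem exists_locally_convex_defining_function
    {n : ℕ} (Ω : Set (E n)) (hΩ : IsOpen Ω) (hbd : Bornology.IsBounded Ω)
    (r : E n → ℝ) (hr : ContDiff ℝ (⊤ : ℕ∞) r) (hdef : Ω = {x | r x < 0})
    (U : Set (E n)) (hU : IsOpen U) (hfr : frontier Ω ⊆ U)
    (hgrad : ∀ x ∈ U, gradient r x ≠ 0)
    (hconv : ∀ p ∈ frontier Ω, ∀ ξ : E n, ⟪gradient r p, ξ⟫ = 0 → 0 ≤ Hess r p ξ ξ)
    (p : E n) (hp : p ∈ frontier Ω) :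
    ∃ V : Set (E n), IsOpen V ∧ p ∈ V ∧ ∃ ρ : E n → ℝ,
      ContDiffOn ℝ (⊤ : ℕ∞) ρ V ∧ Ω ∩ V = {x ∈ V | ρ x < 0} ∧
      (∀ x ∈ frontier Ω ∩ V, gradient ρ x ≠ 0) ∧
      ∀ x ∈ V, ∀ ξ : E n, 0 ≤ Hess ρ x ξ ξ := by
  classical
  have hrd : Differentiable ℝ r := hr.differentiable (by simp)
  have hrc1 : ContDiff ℝ (⊤ : ℕ∞) (fderiv ℝ r) := hr.fderiv_right (by simp)
  have hpU : p ∈ U := hfr hp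
  have hg : gradient r p ≠ 0 := hgrad p hpU
  have hgn : (0:ℝ) < ‖gradient r p‖ := norm_pos_iff.mpr hg
  set ν : E n := ‖gradient r p‖⁻¹ • gradient r p with hνdef
  have hν : ‖ν‖ = 1 := norm_smul_inv_norm hg
  have hrp : r p = 0 := by
    have h1 : r p ≤ 0 := by
      have : p ∈ closure Ω := hp.1
      have : p ∈ closure {x | r x ≤ 0} := by
        refine closure_mono (s := Ω) ?_ this
        rw [hdef]
        intro x hx
        simp only [Set.mem_setOf_eq] at hx ⊢
        exact le_of_lt hx
      rwa [IsClosed.closure_eq (isClosed_le (hrd.continuous) continuous_const)] at this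
    have h2 : ¬ (r p < 0) := by
      intro h
      exact hp.2 (by rw [hΩ.interior_eq, hdef]; exact h)
    linarith [lt_or_ge (r p) 0 |>.resolve_left h2]
  have hfνp : fderiv ℝ r p ν = ‖gradient r p‖ := by
    rw [← inner_grad, hνdef, real_inner_smul_right, real_inner_self_eq_norm_sq]
    field_simp
  -- the map Φ
  set Φ : E n → E n := fun x => Pperp ν x + r x • ν with hΦdef
  have hΦsmooth : ContDiff ℝ (⊤ : ℕ∞) Φ := (Pperp ν).contDiff.add (hr.smul contDiff_const)
  have hΦderiv : ∀ x, HasFDerivAt Φ (DPhi ν (fderiv ℝ r x)) x := by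
    intro x
    exact ((Pperp ν).hasFDerivAt).add ((hrd x).hasFDerivAt.smul_const ν)
  have hGp : fderiv ℝ r p ν ≠ 0 := by rw [hfνp]; exact ne_of_gt hgn
  set A := DPhiEquiv ν hν (fderiv ℝ r p) hGp with hAdef
  have hAΦ : HasFDerivAt Φ (A : E n →L[ℝ] E n) p := by
    rw [hAdef, DPhiEquiv_coe]; exact hΦderiv p
  set Φhom := hΦsmooth.contDiffAt.toOpenPartialHomeomorph Φ hAΦ (by simp) with hΦhomdef
  set Ψ : E n → E n := ⇑Φhom.symm with hΨdef
  have hΦcoe : (Φhom : E n → E n) = Φ := ContDiffAt.toOpenPartialHomeomorph_coe _ _ _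
  have hpsource : p ∈ Φhom.source := ContDiffAt.mem_toOpenPartialHomeomorph_source _ _ _
  have hΦp : Φ p = Pperp ν p := by rw [hΦdef]; simp [hrp]
  have hptarget : Pperp ν p ∈ Φhom.target := by
    rw [← hΦp]; exact ContDiffAt.image_mem_toOpenPartialHomeomorph_target _ _ _
  have hΨp : Ψ (Pperp ν p) = p := by
    rw [← hΦp, hΨdef, ← hΦcoe]
    exact Φhom.left_inv hpsource
  -- smoothness of the local inverse at good points
  have hΨsmooth : ∀ y ∈ Φhom.target, fderiv ℝ r (Ψ y) ν ≠ 0 → ContDiffAt ℝ (⊤ : ℕ∞) Ψ y := by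
    intro y hy hne
    have h1 : HasFDerivAt Φ ((DPhiEquiv ν hν (fderiv ℝ r (Ψ y)) hne : E n ≃L[ℝ] E n) :
        E n →L[ℝ] E n) (Ψ y) := by
      rw [DPhiEquiv_coe]; exact hΦderiv _
    exact Φhom.contDiffAt_symm hy (by rw [hΦcoe]; exact h1)
      (by rw [hΦcoe]; exact hΦsmooth.contDiffAt)
  -- continuity of z ↦ ∂_ν r(z)
  have hccont : Continuous (fun z => fderiv ℝ r z ν) :=
    (hrc1.continuous).clm_apply continuous_const
  -- good region W1
  set W1 : Set (E n) := {z | 0 < fderiv ℝ r z ν} ∩ U with hW1def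
  have hW1open : IsOpen W1 := (isOpen_lt continuous_const hccont).inter hU
  have hpW1 : p ∈ W1 := ⟨by rw [Set.mem_setOf_eq, hfνp]; exact hgn, hpU⟩
  obtain ⟨ε, hε, hball⟩ := Metric.isOpen_iff.mp hW1open p hpW1
  -- basic neighborhood and the functions F, q, ρ
  set N₀ : Set (E n) := (Pperp ν) ⁻¹' Φhom.target with hN₀def
  have hN₀open : IsOpen N₀ := Φhom.open_target.preimage (Pperp ν).continuous
  have hpN₀ : p ∈ N₀ := hptarget
  set F : E n → E n := fun x => Ψ (Pperp ν x) with hFdef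
  set q : E n → ℝ := fun x => ⟪ν, F x⟫ with hqdef
  set ρ : E n → ℝ := fun x => ⟪ν, x⟫ - q x with hρdef
  have hFp : F p = p := hΨp
  have hρp : ρ p = 0 := by rw [hρdef]; simp [hqdef, hFp]
  have hΨcont : ∀ y ∈ Φhom.target, ContinuousAt Ψ y := by
    intro y hy
    exact Φhom.symm.continuousAt (by rwa [Φhom.symm_source])
  have hFcont : ∀ x ∈ N₀, ContinuousAt F x := by
    intro x hx
    exact (hΨcont _ hx).comp (Pperp ν).continuous.continuousAt
  have hρcont : ∀ x ∈ N₀, ContinuousAt ρ x := by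
    intro x hx
    exact ((innerSL ℝ ν).continuous.continuousAt).sub
      (((innerSL ℝ ν).continuous.continuousAt).comp (hFcont x hx))
  -- identities on N₀
  have hrF : ∀ y ∈ N₀, r (F y) = 0 ∧ Pperp ν (F y) = Pperp ν y := by
    intro y hy
    have hright : Φ (F y) = Pperp ν y := by
      have h := Φhom.right_inv (by exact hy)
      rwa [hΦcoe] at h
    have hinner : ∀ z, ⟪ν, Φ z⟫ = r z := by
      intro z
      rw [hΦdef]
      simp only [inner_add_right, real_inner_smul_right]
      rw [inner_Pperp ν hν, inner_nu_nu ν hν]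
      ring
    have hr0 : r (F y) = 0 := by
      rw [← hinner (F y), hright, inner_Pperp ν hν]
    refine ⟨hr0, ?_⟩
    have h5 : Φ (F y) = Pperp ν (F y) := by
      simp only [hΦdef, hr0, zero_smul, add_zero]
    rw [← h5, hright]
  have hFdecomp : ∀ y ∈ N₀, F y = Pperp ν y + q y • ν := by
    intro y hy
    conv_lhs => rw [← Pperp_decomp ν (F y)]
    rw [(hrF y hy).2, hqdef]
  -- the eventual neighborhood N₁
  set N₁ : Set (E n) := {y | y ∈ N₀ ∧ F y ∈ ball p ε} with hN₁def
  have hN₁nhds : ∀ y ∈ N₁, N₁ ∈ 𝓝 y := by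
    intro y hy
    have h1 : {x | F x ∈ ball p ε} ∈ 𝓝 y := (hFcont y hy.1).preimage_mem_nhds
      (isOpen_ball.mem_nhds hy.2)
    filter_upwards [hN₀open.mem_nhds hy.1, h1] with z h2 h3
    exact ⟨h2, h3⟩
  -- smoothness on N₁
  have hFsm : ∀ y ∈ N₁, ContDiffAt ℝ (⊤ : ℕ∞) F y := by
    intro y hy
    have hW : F y ∈ W1 := hball hy.2
    have := hΨsmooth (Pperp ν y) hy.1 (ne_of_gt hW.1)
    exact ContDiffAt.comp y this (Pperp ν).contDiff.contDiffAt
  have hqsm : ∀ y ∈ N₁, ContDiffAt ℝ (⊤ : ℕ∞) q y := by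
    intro y hy
    exact ContDiffAt.comp y ((innerSL ℝ ν).contDiff.contDiffAt) (hFsm y hy)
  have hρsm : ∀ y ∈ N₁, ContDiffAt ℝ (⊤ : ℕ∞) ρ y := by
    intro y hy
    exact ((innerSL ℝ ν).contDiff.contDiffAt).sub (hqsm y hy)
  -- the neighborhood V
  set V : Set (E n) := {x | x ∈ N₀ ∧ F x ∈ ball p (ε/2) ∧ |ρ x| < ε/2} with hVdef
  have hVN₁ : V ⊆ N₁ := by
    intro x hx
    exact ⟨hx.1, ball_subset_ball (by linarith) hx.2.1⟩
  have hVopen : IsOpen V := by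
    rw [isOpen_iff_mem_nhds]
    intro x hx
    have h1 : {y | F y ∈ ball p (ε/2)} ∈ 𝓝 x := (hFcont x hx.1).preimage_mem_nhds
      (isOpen_ball.mem_nhds hx.2.1)
    have h2 : {y | |ρ y| < ε/2} ∈ 𝓝 x := by
      have : ContinuousAt (fun y => |ρ y|) x := (hρcont x hx.1).abs
      exact this.preimage_mem_nhds (isOpen_Iio.mem_nhds (by simpa using hx.2.2))
    filter_upwards [hN₀open.mem_nhds hx.1, h1, h2] with z hz1 hz2 hz3
    exact ⟨hz1, hz2, hz3⟩
  have hpV : p ∈ V := ⟨hpN₀, by simp [hFp, mem_ball_self, half_pos hε], by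
    rw [hρp]; simpa using half_pos hε⟩
  -- differentiability of q on N₁ and derivative of F
  have hqdiff : ∀ y ∈ N₁, DifferentiableAt ℝ q y := fun y hy =>
    (hqsm y hy).differentiableAt (by simp)
  have hFderiv : ∀ y ∈ N₁, HasFDerivAt F (Pperp ν + (fderiv ℝ q y).smulRight ν) y := by
    intro y hy
    have hev : (fun z => Pperp ν z + q z • ν) =ᶠ[𝓝 y] F := by
      filter_upwards [hN₁nhds y hy] with z hz
      exact (hFdecomp z hz.1).symm
    have h1 : HasFDerivAt (fun z => Pperp ν z + q z • ν)
        (Pperp ν + (fderiv ℝ q y).smulRight ν) y :=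
      ((Pperp ν).hasFDerivAt).add ((hqdiff y hy).hasFDerivAt.smul_const ν)
    exact h1.congr_of_eventuallyEq hev.symm
  -- first-order identity
  have hZ : ∀ ξ : E n, ∀ y ∈ N₁,
      fderiv ℝ r (F y) (Pperp ν ξ) + fderiv ℝ q y ξ * fderiv ℝ r (F y) ν = 0 := by
    intro ξ y hy
    have hcomp : HasFDerivAt (fun z => r (F z))
        ((fderiv ℝ r (F y)).comp (Pperp ν + (fderiv ℝ q y).smulRight ν)) y :=
      (hrd (F y)).hasFDerivAt.comp y (hFderiv y hy)
    have hzero : (fun z => r (F z)) =ᶠ[𝓝 y] (fun _ => (0:ℝ)) := by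
      filter_upwards [hN₁nhds y hy] with z hz
      exact (hrF z hz.1).1
    have h0 : HasFDerivAt (fun z => r (F z)) (0 : E n →L[ℝ] ℝ) y :=
      (hasFDerivAt_const (0:ℝ) y).congr_of_eventuallyEq hzero
    have huniq := hcomp.unique h0
    have h2 := DFunLike.congr_fun huniq ξ
    simp only [ContinuousLinearMap.comp_apply, ContinuousLinearMap.add_apply,
      ContinuousLinearMap.smulRight_apply, ContinuousLinearMap.zero_apply,
      map_add, map_smul, smul_eq_mul] at h2
    exact h2
  -- the main Hessian inequality
  have hHessq : ∀ x ∈ V, ∀ ξ : E n, Hess q x ξ ξ ≤ 0 := by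
    intro x hxV ξ
    have hxN₁ : x ∈ N₁ := hVN₁ hxV
    have hFdx : DifferentiableAt ℝ F x := (hFsm x hxN₁).differentiableAt (by simp)
    have hDF : fderiv ℝ F x = Pperp ν + (fderiv ℝ q x).smulRight ν := (hFderiv x hxN₁).fderiv
    set H := fderiv ℝ (fderiv ℝ r) (F x) with hHdef
    set B : E n → ℝ := fun y => fderiv ℝ q y ξ with hBdef
    set w : E n := Pperp ν ξ + B x • ν with hwdef
    have hc : HasFDerivAt (fun y => fderiv ℝ r (F y)) (H.comp (fderiv ℝ F x)) x :=
      (((hrc1.differentiable (by simp)) (F x)).hasFDerivAt).comp x hFdx.hasFDerivAt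
    have hcη : ∀ v : E n, HasFDerivAt (fun y => fderiv ℝ r (F y) v)
        ((fderiv ℝ r (F x)).comp (0 : E n →L[ℝ] E n) + (H.comp (fderiv ℝ F x)).flip v) x :=
      fun v => hc.clm_apply (hasFDerivAt_const v x)
    have hDFξ : fderiv ℝ F x ξ = w := by
      rw [hDF, hwdef]
      simp only [ContinuousLinearMap.add_apply, ContinuousLinearMap.smulRight_apply]
      rfl
    -- differentiability of B
    have hBd : DifferentiableAt ℝ B x := by
      have h1 : ContDiffAt ℝ (⊤ : ℕ∞) (fderiv ℝ q) x := (hqsm x hxN₁).fderiv_right (by simp)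
      exact ((h1.clm_apply contDiffAt_const).differentiableAt (by simp))
    have hBfderiv : fderiv ℝ B x ξ = Hess q x ξ ξ := rfl
    -- differentiate the identity
    have hZ0 : (fun y => fderiv ℝ r (F y) (Pperp ν ξ) + B y * fderiv ℝ r (F y) ν)
        =ᶠ[𝓝 x] (fun _ => (0:ℝ)) := by
      filter_upwards [hN₁nhds x hxN₁] with z hz
      exact hZ ξ z hz
    have hsum : HasFDerivAt
        (fun y => fderiv ℝ r (F y) (Pperp ν ξ) + B y * fderiv ℝ r (F y) ν)
        (((fderiv ℝ r (F x)).comp (0 : E n →L[ℝ] E n) + (H.comp (fderiv ℝ F x)).flip (Pperp ν ξ))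
          + (B x • ((fderiv ℝ r (F x)).comp (0 : E n →L[ℝ] E n) + (H.comp (fderiv ℝ F x)).flip ν)
             + fderiv ℝ r (F x) ν • fderiv ℝ B x)) x :=
      (hcη (Pperp ν ξ)).add ((hBd.hasFDerivAt).mul (hcη ν))
    have h0 : HasFDerivAt
        (fun y => fderiv ℝ r (F y) (Pperp ν ξ) + B y * fderiv ℝ r (F y) ν)
        (0 : E n →L[ℝ] ℝ) x :=
      (hasFDerivAt_const (0:ℝ) x).congr_of_eventuallyEq hZ0
    have huniq := hsum.unique h0
    have hEqξ := DFunLike.congr_fun huniq ξ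
    simp only [ContinuousLinearMap.add_apply, ContinuousLinearMap.smul_apply,
      ContinuousLinearMap.comp_apply, ContinuousLinearMap.zero_apply, map_zero,
      ContinuousLinearMap.flip_apply, zero_add, smul_eq_mul] at hEqξ
    rw [hDFξ, hBfderiv] at hEqξ
    -- hEqξ : H w (Pperp ν ξ) + (B x * H w ν + fderiv r (F x) ν * Hess q x ξ ξ) = 0
    have hHww : H w w = H w (Pperp ν ξ) + B x * H w ν := by
      rw [hwdef]
      conv_lhs => rw [map_add, map_smul, smul_eq_mul]
    -- Hess r equals H evaluated
    have hHr_eq : Hess r (F x) w w = H w w := by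
      have h2 : HasFDerivAt (fun y => fderiv ℝ r y w)
          ((fderiv ℝ r (F x)).comp (0 : E n →L[ℝ] E n) + H.flip w) (F x) :=
        (((hrc1.differentiable (by simp)) (F x)).hasFDerivAt).clm_apply (hasFDerivAt_const w (F x))
      rw [Hess, h2.fderiv]
      simp only [ContinuousLinearMap.add_apply, ContinuousLinearMap.comp_apply,
        ContinuousLinearMap.zero_apply, map_zero, ContinuousLinearMap.flip_apply, zero_add]
    -- tangency and convexity
    have hw0 : fderiv ℝ r (F x) w = 0 := by
      rw [hwdef, map_add, map_smul, smul_eq_mul]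
      exact hZ ξ x hxN₁
    have hFxW : F x ∈ W1 := hball hxN₁.2
    have hfront : F x ∈ frontier Ω :=
      mem_frontier_of_zero hrd hdef (hrF x hxN₁.1).1 (hgrad _ hFxW.2)
    have hHrw : 0 ≤ Hess r (F x) w w := by
      refine hconv _ hfront w ?_
      rw [inner_grad]; exact hw0
    have hCpos : 0 < fderiv ℝ r (F x) ν := hFxW.1
    have h7 : fderiv ℝ r (F x) ν * Hess q x ξ ξ = - Hess r (F x) w w := by
      rw [hHr_eq, hHww]; linarith [hEqξ]
    have h8 : Hess q x ξ ξ = - Hess r (F x) w w / fderiv ℝ r (F x) ν := by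
      rw [eq_div_iff (ne_of_gt hCpos)]
      linarith [h7]
    rw [h8]
    exact div_nonpos_of_nonpos_of_nonneg (by linarith) (le_of_lt hCpos)
  -- Hess ρ = - Hess q on V
  have hHessρeq : ∀ x ∈ V, ∀ ξ : E n, Hess ρ x ξ ξ = - Hess q x ξ ξ := by
    intro x hxV ξ
    have hxN₁ : x ∈ N₁ := hVN₁ hxV
    have hBd' : DifferentiableAt ℝ (fun y => fderiv ℝ q y ξ) x :=
      (((hqsm x hxN₁).fderiv_right (m := (⊤ : ℕ∞)) (by simp)).clm_apply contDiffAt_const).differentiableAt (by simp)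
    have hev : (fun y => fderiv ℝ ρ y ξ) =ᶠ[𝓝 x] (fun y => ⟪ν, ξ⟫ - fderiv ℝ q y ξ) := by
      filter_upwards [hN₁nhds x hxN₁] with z hz
      have h1 : HasFDerivAt ρ (innerSL ℝ ν - fderiv ℝ q z) z :=
        ((innerSL ℝ ν).hasFDerivAt).sub (hqdiff z hz).hasFDerivAt
      rw [h1.fderiv]
      simp only [ContinuousLinearMap.sub_apply]
      rfl
    have h2 : HasFDerivAt (fun y => ⟪ν, ξ⟫ - fderiv ℝ q y ξ)
        (-(fderiv ℝ (fun y => fderiv ℝ q y ξ) x)) x := by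
      simpa using (hBd'.hasFDerivAt).const_sub (⟪ν, ξ⟫ : ℝ)
    show fderiv ℝ (fun y => fderiv ℝ ρ y ξ) x ξ = - Hess q x ξ ξ
    rw [hev.fderiv_eq, h2.fderiv, ContinuousLinearMap.neg_apply]
    rfl
  -- gradient of ρ is nonzero on V
  have hgradρ : ∀ x ∈ V, fderiv ℝ ρ x ν = 1 := by
    intro x hxV
    have hxN₁ : x ∈ N₁ := hVN₁ hxV
    have hW : F x ∈ W1 := hball hxN₁.2
    have hΨsm : ContDiffAt ℝ (⊤ : ℕ∞) Ψ (Pperp ν x) := hΨsmooth (Pperp ν x) hxN₁.1 (ne_of_gt hW.1)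
    have hq' : HasFDerivAt (fun z => (⟪ν, Ψ z⟫ : ℝ))
        ((innerSL ℝ ν).comp (fderiv ℝ Ψ (Pperp ν x))) (Pperp ν x) :=
      ((innerSL ℝ ν).hasFDerivAt).comp _ (hΨsm.differentiableAt (by simp)).hasFDerivAt
    have hqx : HasFDerivAt q
        ((((innerSL ℝ ν).comp (fderiv ℝ Ψ (Pperp ν x))).comp (Pperp ν : E n →L[ℝ] E n))) x :=
      hq'.comp x (Pperp ν).hasFDerivAt
    have hqν : fderiv ℝ q x ν = 0 := by
      rw [hqx.fderiv]
      simp only [ContinuousLinearMap.comp_apply]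
      rw [Pperp_nu ν hν]
      simp
    have h1 : HasFDerivAt ρ (innerSL ℝ ν - fderiv ℝ q x) x :=
      ((innerSL ℝ ν).hasFDerivAt).sub (hqdiff x hxN₁).hasFDerivAt
    rw [h1.fderiv]
    simp only [ContinuousLinearMap.sub_apply, hqν, sub_zero]
    exact inner_nu_nu ν hν
  -- sign equivalence on V
  have hsign : ∀ x ∈ V, (r x < 0 ↔ ρ x < 0) := by
    intro x hxV
    have hxN₁ : x ∈ N₁ := hVN₁ hxV
    set θ : ℝ → ℝ := fun t => r (F x + t • ν) with hθdef
    have hθ0 : θ 0 = 0 := by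
      rw [hθdef]; simpa using (hrF x hxN₁.1).1
    have hxdecomp : F x + ρ x • ν = x := by
      rw [hFdecomp x hxN₁.1, hρdef]
      have h := Pperp_decomp ν x
      rw [add_assoc, ← add_smul]
      convert h using 2
      ring
    have hθρ : θ (ρ x) = r x := by
      show r (F x + ρ x • ν) = r x
      rw [hxdecomp]
    have hline : ∀ t : ℝ, HasDerivAt (fun s : ℝ => F x + s • ν) ν t := by
      intro t
      simpa using ((hasDerivAt_id t).smul_const ν).const_add (F x)
    have hθd : ∀ t : ℝ, HasDerivAt θ (fderiv ℝ r (F x + t • ν) ν) t := by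
      intro t
      have h := (hrd (F x + t • ν)).hasFDerivAt.comp_hasDerivAt t (hline t)
      exact h
    have hmono : StrictMonoOn θ (Set.Icc (-(ε/2)) (ε/2)) := by
      apply strictMonoOn_of_deriv_pos (convex_Icc _ _)
      · exact (hrd.continuous.comp (continuous_const.add
          (continuous_id.smul continuous_const))).continuousOn
      · intro t ht
        rw [interior_Icc] at ht
        have htb : |t| < ε/2 := abs_lt.mpr ⟨ht.1, ht.2⟩
        have hzball : F x + t • ν ∈ ball p ε := by
          rw [mem_ball]
          calc dist (F x + t • ν) p ≤ dist (F x + t • ν) (F x) + dist (F x) p :=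
                dist_triangle _ _ _
            _ < ε := by
                have h1 : dist (F x + t • ν) (F x) = |t| := by
                  rw [dist_eq_norm]
                  simp [norm_smul, hν]
                have h2 : dist (F x) p < ε/2 := mem_ball.mp hxV.2.1
                rw [h1]
                linarith
        rw [(hθd t).deriv]
        exact (hball hzball).1
    have hρmem : ρ x ∈ Set.Icc (-(ε/2)) (ε/2) := by
      have := abs_le.mp (le_of_lt hxV.2.2)
      exact ⟨this.1, this.2⟩
    have h0mem : (0:ℝ) ∈ Set.Icc (-(ε/2)) (ε/2) := by
      constructor <;> [linarith [half_pos hε]; linarith [half_pos hε]]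
    have hiff := hmono.lt_iff_lt hρmem h0mem
    rw [hθρ, hθ0] at hiff
    exact hiff
  -- final assembly
  refine ⟨V, hVopen, hpV, ρ, ?_, ?_, ?_, ?_⟩
  · intro x hx
    exact (hρsm x (hVN₁ hx)).contDiffWithinAt
  · ext x
    constructor
    · rintro ⟨hxΩ, hxV⟩
      refine ⟨hxV, ?_⟩
      rw [← hsign x hxV]
      rw [hdef] at hxΩ
      exact hxΩ
    · rintro ⟨hxV, hρx⟩
      refine ⟨?_, hxV⟩
      rw [hdef]
      exact (hsign x hxV).mpr hρx
  · rintro x ⟨-, hxV⟩ hzero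
    have h1 : (⟪gradient ρ x, ν⟫ : ℝ) = 1 := by rw [inner_grad]; exact hgradρ x hxV
    rw [hzero, inner_zero_left] at h1
    norm_num at h1
  · intro x hx ξ
    rw [hHessρeq x hx ξ]
    linarith [hHessq x hx ξ]
end

section
/- Let δ be smooth near bΩ with ‖∇δ‖ ≡ 1 and b(x) = x - δ(x)∇δ(x). If the Hessian matrix 𝓗_{b(x)}^δ is positive semidefinite at a point b(x) ∈ bΩ and x ∈ Ω (so δ(x) < 0) with ‖δ(x)·𝓗_{b(x)}^δ‖ < 1, then 𝓗ₓ^δ = 𝓗_{b(x)}^δ·Σ_{m≥0}(-δ(x))^m (𝓗_{b(x)}^δ)^m is positive semidefinite. -/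
open RealInnerProductSpace Metric Bornology

lemma pow_psd {n : ℕ} (M : E n →L[ℝ] E n)
    (hsymm : ∀ u v, ⟪M u, v⟫ = ⟪u, M v⟫) (hpsd : ∀ u, 0 ≤ ⟪M u, u⟫) :
    ∀ (k : ℕ) (ξ : E n), 0 ≤ ⟪(M ^ k) ξ, ξ⟫ := by
  have hps : ∀ (j : ℕ) (u v), ⟪(M ^ j) u, v⟫ = ⟪u, (M ^ j) v⟫ := by
    intro j
    induction j with
    | zero => simp
    | succ j ih =>
      intro u v
      calc ⟪(M ^ j * M) u, v⟫ = ⟪(M ^ j) (M u), v⟫ := rfl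
        _ = ⟪M u, (M ^ j) v⟫ := ih _ _
        _ = ⟪u, M ((M ^ j) v)⟫ := hsymm _ _
        _ = ⟪u, (M * M ^ j) v⟫ := rfl
        _ = ⟪u, (M ^ j * M) v⟫ := by rw [← pow_succ', pow_succ]
  intro k ξ
  rcases Nat.even_or_odd k with ⟨j, hj⟩ | ⟨j, hj⟩
  · subst hj
    rw [pow_add, ContinuousLinearMap.mul_apply, hps j]
    exact real_inner_self_nonneg
  · subst hj
    have : 2 * j + 1 = j + 1 + j := by ring
    rw [this, pow_add, pow_succ, ContinuousLinearMap.mul_apply,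
      ContinuousLinearMap.mul_apply, hps j]
    exact hpsd _

set_option maxHeartbeats 1000000 in
set_option synthInstance.maxHeartbeats 400000 in
open scoped Classical in
/-- for `x ∈ Ω` (so `δ(x) < 0`), if the Hessian of the signed distance
function at the nearest boundary point `b(x)` is positive semidefinite and
`‖δ(x)·𝓗_{b(x)}‖ < 1`, then the Hessian at `x`, given by the Neumann series
`𝓗_{b(x)}·Σ (-δ(x))^m (𝓗_{b(x)})^m`, is positive semidefinite. -/
theorem signed_distance_hessian_psd_inside
    {n : ℕ} (Ω : Set (E n)) (hΩ : IsOpen Ω) (hbd : Bornology.IsBounded Ω)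
    (U : Set (E n)) (hU : IsOpen U) (hfr : frontier Ω ⊆ U)
    (δ : E n → ℝ)
    (hsd : ∀ x, δ x = if x ∈ Ω then -Metric.infDist x (frontier Ω)
      else Metric.infDist x (frontier Ω))
    (hsm : ContDiffOn ℝ (⊤ : ℕ∞) δ U) (hgrad : ∀ x ∈ U, ‖gradient δ x‖ = 1)
    (b : E n → E n) (hb : ∀ x, b x = x - δ x • gradient δ x)
    (hbfr : ∀ x ∈ U, b x ∈ frontier Ω)
    (hgb : ∀ x ∈ U, gradient δ x = gradient δ (b x))
    (x : E n) (hx : x ∈ U) (hxΩ : x ∈ Ω) (hδx : δ x < 0)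
    (hpsd : ∀ ξ : E n, 0 ≤ ⟪fderiv ℝ (fun y => gradient δ y) (b x) ξ, ξ⟫)
    (hnorm : ‖δ x • fderiv ℝ (fun y => gradient δ y) (b x)‖ < 1) :
    ∀ ξ : E n, 0 ≤ ⟪fderiv ℝ (fun y => gradient δ y) x ξ, ξ⟫ := by
  set G : E n → E n := fun y => gradient δ y with hG
  set M : E n →L[ℝ] E n := fderiv ℝ G (b x) with hM
  set A : E n →L[ℝ] E n := fderiv ℝ G x with hA
  have hbxU : b x ∈ U := hfr (hbfr x hx)
  -- smoothness of fderiv δ and of G on U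
  have h2 : ContDiffOn ℝ 2 δ U := hsm.of_le (WithTop.coe_le_coe.mpr le_top)
  have hf'C : ContDiffOn ℝ 1 (fderiv ℝ δ) U := by
    apply h2.fderiv_of_isOpen hU
    norm_num
  have hGC : ContDiffOn ℝ 1 G U := by
    have hd : ContDiff ℝ 1
        ((InnerProductSpace.toDual ℝ (E n)).symm : (E n →L[ℝ] ℝ) → E n) :=
      (InnerProductSpace.toDual ℝ (E n)).symm.contDiff
    exact hd.comp_contDiffOn hf'C
  have hGdiff : ∀ y ∈ U, DifferentiableAt ℝ G y := fun y hy =>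
    ((hGC.differentiableOn one_ne_zero) y hy).differentiableAt (hU.mem_nhds hy)
  have hf'diff : ∀ y ∈ U, DifferentiableAt ℝ (fderiv ℝ δ) y := fun y hy =>
    ((hf'C.differentiableOn one_ne_zero) y hy).differentiableAt (hU.mem_nhds hy)
  have hδdiff : ∀ y ∈ U, DifferentiableAt ℝ δ y := fun y hy =>
    ((hsm.differentiableOn (by simp)) y hy).differentiableAt (hU.mem_nhds hy)
  -- ⟪G y, v⟫ = fderiv δ y v
  have hinner : ∀ (y : E n) (v : E n), ⟪G y, v⟫ = fderiv ℝ δ y v := fun y v =>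
    InnerProductSpace.toDual_symm_apply
  -- for any y ∈ U and v, ⟪v, fderiv G y ξ⟫ = fderiv (fderiv δ) y ξ v
  have hkey : ∀ y ∈ U, ∀ v ξ : E n,
      ⟪v, fderiv ℝ G y ξ⟫ = fderiv ℝ (fderiv ℝ δ) y ξ v := by
    intro y hy v ξ
    have h1 : (fun z => ⟪v, G z⟫) = fun z => fderiv ℝ δ z v := by
      funext z
      rw [real_inner_comm, hinner]
    have h2' : HasFDerivAt (fun z => ⟪v, G z⟫)
        ((innerSL ℝ v).comp (fderiv ℝ G y)) y :=
      ((innerSL ℝ v).hasFDerivAt).comp y (hGdiff y hy).hasFDerivAt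
    have h3 : HasFDerivAt (fun z => fderiv ℝ δ z v)
        ((ContinuousLinearMap.apply ℝ ℝ v).comp (fderiv ℝ (fderiv ℝ δ) y)) y :=
      ((ContinuousLinearMap.apply ℝ ℝ v).hasFDerivAt).comp y (hf'diff y hy).hasFDerivAt
    have := h2'.fderiv
    rw [h1] at this
    rw [h3.fderiv] at this
    have := congrArg (fun (L : E n →L[ℝ] ℝ) => L ξ) this
    simpa using this.symm
  -- symmetry of M
  have hsymmsnd : IsSymmSndFDerivAt ℝ δ (b x) :=
    (hsm.contDiffAt (hU.mem_nhds hbxU)).isSymmSndFDerivAt (by rw [minSmoothness_of_isRCLikeNormedField]; exact WithTop.coe_le_coe.mpr le_top)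
  have hMsymm : ∀ u v, ⟪M u, v⟫ = ⟪u, M v⟫ := by
    intro u v
    rw [hM]
    calc ⟪(fderiv ℝ G (b x)) u, v⟫ = ⟪v, (fderiv ℝ G (b x)) u⟫ := real_inner_comm _ _
      _ = fderiv ℝ (fderiv ℝ δ) (b x) u v := hkey (b x) hbxU v u
      _ = fderiv ℝ (fderiv ℝ δ) (b x) v u := hsymmsnd u v
      _ = ⟪u, (fderiv ℝ G (b x)) v⟫ := (hkey (b x) hbxU u v).symm
  -- M annihilates the gradient at b x
  have hMG : M (G (b x)) = 0 := by
    have hsq : ∀ ζ, ⟪M ζ, G (b x)⟫ = 0 := by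
      intro ζ
      have hconst : (fun y => ⟪G y, G y⟫) =ᶠ[nhds (b x)] fun _ => (1 : ℝ) := by
        filter_upwards [hU.mem_nhds hbxU] with y hy
        have := hgrad y hy
        rw [real_inner_self_eq_norm_sq]
        simp [hG, this]
      have hder : fderiv ℝ (fun y => ⟪G y, G y⟫) (b x) = 0 := by
        rw [hconst.fderiv_eq, fderiv_const_apply]
      have happ := congrArg (fun (L : E n →L[ℝ] ℝ) => L ζ) hder
      simp only [ContinuousLinearMap.zero_apply] at happ
      rw [fderiv_inner_apply ℝ (hGdiff _ hbxU) (hGdiff _ hbxU) ζ] at happ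
      rw [real_inner_comm (G (b x)) ((fderiv ℝ G (b x)) ζ), ← hM] at happ
      have h0 : ⟪G (b x), M ζ⟫ = 0 := by linarith
      rw [real_inner_comm]
      exact h0
    have : ∀ ζ, ⟪M (G (b x)), ζ⟫ = 0 := by
      intro ζ
      rw [hMsymm, real_inner_comm, hsq]
    have h0 := this (M (G (b x)))
    rwa [real_inner_self_eq_norm_sq, pow_eq_zero_iff (by norm_num), norm_eq_zero] at h0
  -- derivative identity at x
  have hGx : G x = G (b x) := hgb x hx
  have hMGx : M (G x) = 0 := by rw [hGx]; exact hMG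
  have hbders : HasFDerivAt b (ContinuousLinearMap.id ℝ (E n)
      - (δ x • A + (fderiv ℝ δ x).smulRight (G x))) x := by
    have hs : HasFDerivAt (fun y => δ y • G y)
        (δ x • A + (fderiv ℝ δ x).smulRight (G x)) x :=
      (hδdiff x hx).hasFDerivAt.smul (hGdiff x hx).hasFDerivAt
    have hid : HasFDerivAt (fun y : E n => y - δ y • G y)
        (ContinuousLinearMap.id ℝ (E n)
          - (δ x • A + (fderiv ℝ δ x).smulRight (G x))) x :=
      (hasFDerivAt_id x).sub hs
    have hbfun : b = fun y => y - δ y • G y := funext hb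
    rw [hbfun]
    exact hid
  have hcomp : A = M.comp (ContinuousLinearMap.id ℝ (E n)
      - (δ x • A + (fderiv ℝ δ x).smulRight (G x))) := by
    have hev : G =ᶠ[nhds x] (G ∘ b) := by
      filter_upwards [hU.mem_nhds hx] with y hy
      exact hgb y hy
    have : fderiv ℝ G x = (fderiv ℝ G (b x)).comp (ContinuousLinearMap.id ℝ (E n)
        - (δ x • A + (fderiv ℝ δ x).smulRight (G x))) := by
      rw [hev.fderiv_eq, fderiv_comp x (hGdiff _ hbxU) hbders.differentiableAt,
        hbders.fderiv]
    rw [hA, hM]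
    exact this
  have hpt : ∀ ξ, A ξ + δ x • M (A ξ) = M ξ := by
    intro ξ
    have h1 : A ξ = M (ξ - (δ x • A ξ + (fderiv ℝ δ x ξ) • G x)) := by
      conv_lhs => rw [hcomp]
      simp only [ContinuousLinearMap.coe_comp', Function.comp_apply,
        ContinuousLinearMap.sub_apply, ContinuousLinearMap.coe_id', id_eq,
        ContinuousLinearMap.add_apply, ContinuousLinearMap.smul_apply,
        ContinuousLinearMap.smulRight_apply]
    rw [map_sub, map_add, map_smul, map_smul, hMGx, smul_zero, add_zero] at h1
    rw [eq_sub_iff_add_eq] at h1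
    exact h1
  -- Neumann series
  have ht : ‖(-δ x) • M‖ < 1 := by
    have h : (-δ x) • M = -(δ x • M) := by
      apply ContinuousLinearMap.ext
      intro v
      simp [ContinuousLinearMap.smul_apply, neg_smul]
    rw [h, norm_neg]
    exact hnorm
  set t : E n →L[ℝ] E n := (-δ x) • M with htdef
  have hMA : (1 - t) * A = M := by
    apply ContinuousLinearMap.ext
    intro ξ
    calc ((1 - t) * A) ξ = A ξ - ((-δ x) • M) (A ξ) := rfl
      _ = A ξ + δ x • M (A ξ) := by
          rw [ContinuousLinearMap.smul_apply, neg_smul, sub_neg_eq_add]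
      _ = M ξ := hpt ξ
  have hsum : Summable (fun m : ℕ => t ^ m) := summable_geometric_of_norm_lt_one ht
  have hAeq : A = (∑' m : ℕ, t ^ m) * M := by
    have hu : ((Units.oneSub t ht : (E n →L[ℝ] E n)ˣ) : E n →L[ℝ] E n) * A = M := by
      rw [Units.val_oneSub]; exact hMA
    calc A = ↑(Units.oneSub t ht)⁻¹ * (↑(Units.oneSub t ht) * A) := by
          rw [← mul_assoc, Units.inv_mul, one_mul]
      _ = ↑(Units.oneSub t ht)⁻¹ * M := by rw [hu]
      _ = (∑' m : ℕ, t ^ m) * M := by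
          rw [← NormedRing.inverse_one_sub t ht, ← geom_series_eq_inverse t ht]
  intro ξ
  have h1 : HasSum (fun m : ℕ => (t ^ m) (M ξ)) ((∑' m : ℕ, t ^ m) (M ξ)) := by
    have := hsum.hasSum.mapL (ContinuousLinearMap.apply ℝ (E n) (M ξ))
    simpa using this
  have h2 : HasSum (fun m : ℕ => ⟪ξ, (t ^ m) (M ξ)⟫) ⟪ξ, (∑' m : ℕ, t ^ m) (M ξ)⟫ := by
    have := h1.mapL (innerSL ℝ ξ)
    simpa using this
  have hAξ : A ξ = (∑' m : ℕ, t ^ m) (M ξ) := by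
    rw [hAeq]; rfl
  rw [real_inner_comm, hAξ, ← h2.tsum_eq]
  apply tsum_nonneg
  intro m
  rw [real_inner_comm]
  have hsp : ∀ (k : ℕ) (v : E n), (t ^ k) v = (-δ x) ^ k • (M ^ k) v := by
    intro k
    induction k with
    | zero => intro v; simp
    | succ k ih =>
      intro v
      calc (t ^ (k + 1)) v = (t ^ k) (t v) := by
            rw [pow_succ, ContinuousLinearMap.mul_apply]
        _ = (t ^ k) ((-δ x) • M v) := rfl
        _ = (-δ x) • (t ^ k) (M v) := map_smul _ _ _
        _ = (-δ x) • ((-δ x) ^ k • (M ^ k) (M v)) := by rw [ih]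
        _ = (-δ x) ^ (k + 1) • (M ^ (k + 1)) v := by
            rw [smul_smul, ← pow_succ', ← ContinuousLinearMap.mul_apply, ← pow_succ]
  have hterm : (t ^ m) (M ξ) = (-δ x) ^ m • (M ^ (m + 1)) ξ := by
    rw [hsp m (M ξ), ← ContinuousLinearMap.mul_apply, ← pow_succ]
  rw [hterm, real_inner_smul_left]
  exact mul_nonneg (pow_nonneg (by linarith) m) (pow_psd M hMsymm hpsd (m + 1) ξ)
end

section
/- Let σ be a smooth defining function for a smoothly bounded domain Ω on a neighborhood U of p ∈ bΩ with ‖∇σ‖ = 1 on bΩ ∩ U. Then for x ∈ bΩ ∩ U and τ ∈ Tₓ(bΩ): ⟨∇(H_σ(τ,τ)), ∇σ⟩(x) = H_σ(τ,τ)(x)·H_σ(∇σ,∇σ)(x) − H_σ(τ, 𝓗ₓ^σ τ)(x). -/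
open RealInnerProductSpace Metric Bornology

open Topology Filter Set

set_option maxHeartbeats 1000000

section Aux

lemma range_top_of_ne_zero {F : Type*} [NormedAddCommGroup F] [NormedSpace ℝ F]
    (f' : F →L[ℝ] ℝ) (h : f' ≠ 0) : LinearMap.range (f' : F →ₗ[ℝ] ℝ) = ⊤ := by
  have : ∃ u, f' u ≠ 0 := by
    by_contra hc
    push_neg at hc
    exact h (ContinuousLinearMap.ext fun u => by simp [hc u])
  obtain ⟨u, hu⟩ := this
  rw [LinearMap.range_eq_top]
  intro c
  exact ⟨(c / f' u) • u, by simp [div_mul_cancel₀ _ hu]⟩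

/-- Tangential derivatives of a function vanishing on a level set vanish. -/
lemma tangent_fderiv_eq_zero {n : ℕ} {σ f : E n → ℝ} {x : E n} {V : Set (E n)}
    (hV : V ∈ 𝓝 x) (hσ : ContDiffAt ℝ (⊤ : ℕ∞) σ x) (hne : fderiv ℝ σ x ≠ 0)
    (hf : DifferentiableAt ℝ f x)
    (hfz : ∀ y ∈ V, σ y = σ x → f y = 0)
    {τ : E n} (hτ : fderiv ℝ σ x τ = 0) : fderiv ℝ f x τ = 0 := by
  set f' := fderiv ℝ σ x with hf'def
  have hst : HasStrictFDerivAt σ f' x := hσ.hasStrictFDerivAt (by simp)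
  have hrange : LinearMap.range (f' : E n →ₗ[ℝ] ℝ) = ⊤ := range_top_of_ne_zero _ hne
  set ψ : LinearMap.ker (f' : E n →ₗ[ℝ] ℝ) → E n := hst.implicitFunction σ f' hrange (σ x) with hψdef
  have hψ0 : ψ 0 = x := hst.implicitFunction_apply_image hrange
  have hψd : HasStrictFDerivAt ψ (LinearMap.ker (f' : E n →ₗ[ℝ] ℝ)).subtypeL 0 :=
    hst.to_implicitFunction hrange
  have hev : ∀ᶠ z in 𝓝 (0 : LinearMap.ker (f' : E n →ₗ[ℝ] ℝ)), σ (ψ z) = σ x := by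
    have h1 := hst.map_implicitFunction_eq hrange
    have h2 : Tendsto (fun z : LinearMap.ker (f' : E n →ₗ[ℝ] ℝ) => ((σ x : ℝ), z)) (𝓝 0) (𝓝 (σ x, 0)) := by
      rw [nhds_prod_eq]; exact tendsto_const_nhds.prodMk tendsto_id
    exact h2.eventually h1
  have hevV : ∀ᶠ z in 𝓝 (0 : LinearMap.ker (f' : E n →ₗ[ℝ] ℝ)), ψ z ∈ V := by
    have hc : ContinuousAt ψ 0 := hψd.continuousAt
    have : Tendsto ψ (𝓝 0) (𝓝 x) := by rw [← hψ0]; exact hc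
    exact this hV
  have hfψ : (fun z => f (ψ z)) =ᶠ[𝓝 (0 : LinearMap.ker (f' : E n →ₗ[ℝ] ℝ))] fun _ => (0 : ℝ) := by
    filter_upwards [hev, hevV] with z h1 h2
    exact hfz _ h2 h1
  have hcomp : HasFDerivAt (fun z => f (ψ z))
      ((fderiv ℝ f x).comp (LinearMap.ker (f' : E n →ₗ[ℝ] ℝ)).subtypeL) 0 := by
    have h : HasFDerivAt f (fderiv ℝ f x) (ψ 0) := hψ0 ▸ hf.hasFDerivAt
    exact h.comp 0 hψd.hasFDerivAt
  have hzero : HasFDerivAt (fun z => f (ψ z))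
      (0 : LinearMap.ker (f' : E n →ₗ[ℝ] ℝ) →L[ℝ] ℝ) 0 :=
    (hasFDerivAt_const (0 : ℝ) (0 : LinearMap.ker (f' : E n →ₗ[ℝ] ℝ))).congr_of_eventuallyEq hfψ
  have heq := hcomp.unique hzero
  have hmem : τ ∈ LinearMap.ker (f' : E n →ₗ[ℝ] ℝ) := LinearMap.mem_ker.2 hτ
  have := ContinuousLinearMap.ext_iff.1 heq ⟨τ, hmem⟩
  simpa using this

lemma sigma_eq_zero_on_frontier {n : ℕ} {Ω U : Set (E n)} (hΩ : IsOpen Ω) (hU : IsOpen U)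
    {σ : E n → ℝ} (hσ : ContDiffOn ℝ (⊤ : ℕ∞) σ U)
    (hdef : Ω ∩ U = {x ∈ U | σ x < 0}) {x : E n} (hx : x ∈ frontier Ω ∩ U) : σ x = 0 := by
  obtain ⟨hxf, hxU⟩ := hx
  have hxnot : x ∉ Ω := by
    rw [hΩ.frontier_eq] at hxf; exact hxf.2
  have hge : ¬ σ x < 0 := by
    intro h
    have : x ∈ Ω ∩ U := by rw [hdef]; exact ⟨hxU, h⟩
    exact hxnot this.1
  have hcl : x ∈ closure (U ∩ Ω) := hU.inter_closure ⟨hxU, frontier_subset_closure hxf⟩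
  have hne : (𝓝[U ∩ Ω] x).NeBot := mem_closure_iff_nhdsWithin_neBot.1 hcl
  have hct : Tendsto σ (𝓝[U ∩ Ω] x) (𝓝 (σ x)) :=
    ((hσ.contDiffAt (hU.mem_nhds hxU)).continuousAt).continuousWithinAt
  have hle : σ x ≤ 0 := by
    refine le_of_tendsto hct (eventually_nhdsWithin_of_forall fun y hy => le_of_lt ?_)
    have : y ∈ Ω ∩ U := ⟨hy.2, hy.1⟩
    rw [hdef] at this
    exact this.2
  linarith [not_lt.1 hge]

lemma mem_frontier_of_level {n : ℕ} {Ω U : Set (E n)} (hΩ : IsOpen Ω) (hU : IsOpen U)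
    {σ : E n → ℝ} (hσ : ContDiffOn ℝ (⊤ : ℕ∞) σ U)
    (hdef : Ω ∩ U = {x ∈ U | σ x < 0}) {y : E n} (hyU : y ∈ U) (hy0 : σ y = 0)
    (hne : fderiv ℝ σ y ≠ 0) : y ∈ frontier Ω := by
  have hynot : y ∉ Ω := by
    intro h
    have : y ∈ Ω ∩ U := ⟨h, hyU⟩
    rw [hdef] at this
    linarith [this.2]
  obtain ⟨u0, hu0⟩ : ∃ u, fderiv ℝ σ y u ≠ 0 := by
    by_contra hc
    push_neg at hc
    exact hne (ContinuousLinearMap.ext fun u => by simp [hc u])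
  obtain ⟨u, hu⟩ : ∃ u, fderiv ℝ σ y u < 0 := by
    rcases lt_or_gt_of_ne hu0 with h | h
    · exact ⟨u0, h⟩
    · exact ⟨-u0, by simpa using h⟩
  set c : ℝ → E n := fun t => y + t • u with hcdef
  have hc0 : c 0 = y := by simp [hcdef]
  have hcd : HasDerivAt c u 0 := by
    have h := ((hasDerivAt_id (0:ℝ)).smul_const u).const_add y; rw [one_smul] at h; exact h
  have hσd : HasDerivAt (σ ∘ c) (fderiv ℝ σ y u) 0 := by
    have hf : HasFDerivAt σ (fderiv ℝ σ y) (c 0) := by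
      rw [hc0]
      exact ((hσ.contDiffAt (hU.mem_nhds hyU)).differentiableAt (by simp)).hasFDerivAt
    exact hf.comp_hasDerivAt 0 hcd
  have hslope : Tendsto (slope (σ ∘ c) 0) (𝓝[≠] (0:ℝ)) (𝓝 (fderiv ℝ σ y u)) :=
    hasDerivAt_iff_tendsto_slope.1 hσd
  have hev1 : ∀ᶠ t in 𝓝[>] (0:ℝ), slope (σ ∘ c) 0 t < 0 := by
    have h1 : ∀ᶠ t in 𝓝[≠] (0:ℝ), slope (σ ∘ c) 0 t < 0 :=
      hslope.eventually_lt_const hu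
    exact h1.filter_mono (nhdsWithin_mono 0 fun t ht => ne_of_gt ht)
  have hct : Tendsto c (𝓝[>] (0:ℝ)) (𝓝 y) := by
    have : ContinuousAt c 0 := hcd.continuousAt
    rw [← hc0]
    exact this.continuousWithinAt
  have hev2 : ∀ᶠ t in 𝓝[>] (0:ℝ), c t ∈ U := hct (hU.mem_nhds hyU)
  have hev3 : ∀ᶠ t in 𝓝[>] (0:ℝ), c t ∈ Ω := by
    filter_upwards [hev1, hev2, self_mem_nhdsWithin] with t h1 h2 ht
    have ht' : (0:ℝ) < t := ht
    have hst : slope (σ ∘ c) 0 t = σ (c t) / t := by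
      simp [slope_def_field, hc0, hy0, Function.comp]
    have hdiv : σ (c t) / t < 0 := hst ▸ h1
    have hneg : σ (c t) < 0 := by
      rcases div_neg_iff.1 hdiv with ⟨h, h'⟩ | ⟨h, h'⟩
      · linarith
      · exact h
    have : c t ∈ Ω ∩ U := by rw [hdef]; exact ⟨h2, hneg⟩
    exact this.1
  have hcl : y ∈ closure Ω := mem_closure_of_tendsto hct hev3
  rw [hΩ.frontier_eq]
  exact ⟨hcl, hynot⟩

/-- The inverse of `toDual` as a genuinely `ℝ`-linear continuous map. -/
noncomputable def LcMap (n : ℕ) : (E n →L[ℝ] ℝ) →L[ℝ] E n :=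
  LinearMap.toContinuousLinearMap
    { toFun := fun ℓ => (InnerProductSpace.toDual ℝ (E n)).symm ℓ
      map_add' := fun a b => by simp
      map_smul' := fun r a => by simp }

lemma LcMap_inner {n : ℕ} (ℓ : E n →L[ℝ] ℝ) (w : E n) : ⟪LcMap n ℓ, w⟫ = ℓ w :=
  InnerProductSpace.toDual_symm_apply

lemma gradient_eq_LcMap {n : ℕ} (σ : E n → ℝ) (y : E n) :
    gradient σ y = LcMap n (fderiv ℝ σ y) := rfl

lemma inner_gradient_eq_fderiv {n : ℕ} (h : E n → ℝ) (y v : E n) :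
    ⟪gradient h y, v⟫ = fderiv ℝ h y v :=
  InnerProductSpace.toDual_symm_apply

end Aux

/-- for a defining function `σ` with `‖∇σ‖ = 1` on `bΩ ∩ U`, at boundary
points and tangential `τ`:
`⟨∇(H_σ(τ,τ)), ∇σ⟩ = H_σ(τ,τ)·H_σ(∇σ,∇σ) − H_σ(τ, 𝓗ₓ^σ τ)`. -/
theorem third_derivative_identity
    {n : ℕ} (Ω U : Set (E n)) (hΩ : IsOpen Ω) (hU : IsOpen U)
    (σ : E n → ℝ) (hσ : ContDiffOn ℝ (⊤ : ℕ∞) σ U)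
    (hdef : Ω ∩ U = {x ∈ U | σ x < 0})
    (hgrad : ∀ y ∈ frontier Ω ∩ U, ‖gradient σ y‖ = 1)
    (x : E n) (hx : x ∈ frontier Ω ∩ U) (τ : E n) (hτ : ⟪gradient σ x, τ⟫ = 0) :
    ⟪gradient (fun y => Hess σ y τ τ) x, gradient σ x⟫ =
      Hess σ x τ τ * Hess σ x (gradient σ x) (gradient σ x)
        - Hess σ x τ (fderiv ℝ (fun y => gradient σ y) x τ) := by
  obtain ⟨hxf, hxU⟩ := hx
  have hUx : U ∈ 𝓝 x := hU.mem_nhds hxU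
  set L := LcMap n with hL
  set g : E n → E n := fun y => gradient σ y with hg
  set D2 : E n → (E n →L[ℝ] (E n →L[ℝ] ℝ)) := fderiv ℝ (fderiv ℝ σ) with hD2
  -- basic smoothness facts
  have hσat : ∀ y ∈ U, ContDiffAt ℝ (⊤ : ℕ∞) σ y := fun y hy => hσ.contDiffAt (hU.mem_nhds hy)
  have hF1 : ∀ y ∈ U, HasFDerivAt σ (fderiv ℝ σ y) y := fun y hy =>
    ((hσat y hy).differentiableAt (by simp)).hasFDerivAt
  have hC1 : ∀ y ∈ U, ContDiffAt ℝ (⊤ : ℕ∞) (fderiv ℝ σ) y := fun y hy =>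
    (hσat y hy).fderiv_right (by simp)
  have hF2 : ∀ y ∈ U, HasFDerivAt (fderiv ℝ σ) (D2 y) y := fun y hy =>
    ((hC1 y hy).differentiableAt (by simp)).hasFDerivAt
  have hC2 : ∀ y ∈ U, ContDiffAt ℝ (⊤ : ℕ∞) D2 y := fun y hy =>
    (hC1 y hy).fderiv_right (by simp)
  set D3 : E n →L[ℝ] (E n →L[ℝ] (E n →L[ℝ] ℝ)) := fderiv ℝ D2 x with hD3
  have hF3 : HasFDerivAt D2 D3 x := ((hC2 x hxU).differentiableAt (by simp)).hasFDerivAt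
  -- gradient as smooth map
  have hFg : ∀ y ∈ U, HasFDerivAt g (L.comp (D2 y)) y := by
    intro y hy
    have h1 : HasFDerivAt (fun z => L (fderiv ℝ σ z)) (L.comp (D2 y)) y :=
      L.hasFDerivAt.comp y (hF2 y hy)
    have h2 : g = fun z => L (fderiv ℝ σ z) := by
      funext z; rw [hg, hL]; exact gradient_eq_LcMap σ z
    rw [h2]
    exact h1
  -- Hessian identified with second derivative
  have hHess : ∀ y ∈ U, ∀ ξ ζ : E n, Hess σ y ξ ζ = D2 y ξ ζ := by
    intro y hy ξ ζ
    have h1 : HasFDerivAt (fun z => fderiv ℝ σ z ζ)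
        ((fderiv ℝ σ y).comp (0 : E n →L[ℝ] E n) + (D2 y).flip ζ) y :=
      (hF2 y hy).clm_apply (hasFDerivAt_const ζ y)
    rw [Hess, h1.fderiv]
    simp
  -- symmetry of the second derivative
  have hsym2 : ∀ y ∈ U, ∀ v w : E n, D2 y v w = D2 y w v := by
    intro y hy v w
    exact second_derivative_symmetric_of_eventually
      (by filter_upwards [hU.mem_nhds hy] with z hz using hF1 z hz) (hF2 y hy) v w
  -- symmetry of the third derivative, last two slots
  have hsym23 : ∀ a b c : E n, D3 a b c = D3 a c b := by
    intro a b c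
    have h1 := (hF3.clm_apply (hasFDerivAt_const b x)).clm_apply (hasFDerivAt_const c x)
    have h2 := (hF3.clm_apply (hasFDerivAt_const c x)).clm_apply (hasFDerivAt_const b x)
    have heq : (fun y => D2 y b c) =ᶠ[𝓝 x] (fun y => D2 y c b) := by
      filter_upwards [hUx] with z hz using hsym2 z hz b c
    have h2' := h2.congr_of_eventuallyEq heq
    have := h1.unique h2'
    have happ := ContinuousLinearMap.ext_iff.1 this a
    simpa using happ
  -- symmetry of the third derivative, first two slots
  have hsym12 : ∀ a b c : E n, D3 a b c = D3 b a c := by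
    intro a b c
    set Ac : (E n →L[ℝ] ℝ) →L[ℝ] ℝ := ContinuousLinearMap.apply ℝ ℝ c with hAc
    set CL : (E n →L[ℝ] (E n →L[ℝ] ℝ)) →L[ℝ] (E n →L[ℝ] ℝ) :=
      ContinuousLinearMap.compL ℝ (E n) (E n →L[ℝ] ℝ) ℝ Ac with hCL
    have hh : ∀ᶠ z in 𝓝 x, HasFDerivAt (fun y => fderiv ℝ σ y c) (Ac.comp (D2 z)) z := by
      filter_upwards [hUx] with z hz
      exact Ac.hasFDerivAt.comp z (hF2 z hz)
    have hh2 : HasFDerivAt (fun z => Ac.comp (D2 z)) (CL.comp D3) x := by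
      have := (hasFDerivAt_const Ac x).clm_comp hF3
      simp at this
      exact this
    have := second_derivative_symmetric_of_eventually hh hh2 a b
    simpa [hCL, hAc] using this
  -- the good neighborhood V
  have hD1cont : ContinuousOn (fderiv ℝ σ) U := hσ.continuousOn_fderiv_of_isOpen hU (by simp)
  set V : Set (E n) := U ∩ (fderiv ℝ σ) ⁻¹' {(0 : E n →L[ℝ] ℝ)}ᶜ with hV
  have hVopen : IsOpen V := hD1cont.isOpen_inter_preimage hU isOpen_compl_singleton
  have hVU : ∀ y ∈ V, y ∈ U := fun y hy => hy.1
  have hVne : ∀ y ∈ V, fderiv ℝ σ y ≠ 0 := fun y hy => hy.2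
  have hgx1 : ‖g x‖ = 1 := hgrad x ⟨hxf, hxU⟩
  have hD1x : fderiv ℝ σ x ≠ 0 := by
    intro h
    have h2 : gradient σ x = 0 := by
      rw [gradient_eq_LcMap σ x, h, map_zero]
    have h3 : ‖gradient σ x‖ = 1 := hgx1
    rw [h2] at h3
    simp at h3
  have hxV : x ∈ V := ⟨hxU, by simpa using hD1x⟩
  have hVx : V ∈ 𝓝 x := hVopen.mem_nhds hxV
  have hfr : ∀ y ∈ V, σ y = 0 → y ∈ frontier Ω ∩ U := fun y hy h0 =>
    ⟨mem_frontier_of_level hΩ hU hσ hdef (hVU y hy) h0 (hVne y hy), hVU y hy⟩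
  have hσx0 : σ x = 0 := sigma_eq_zero_on_frontier hΩ hU hσ hdef ⟨hxf, hxU⟩
  have hτ' : fderiv ℝ σ x τ = 0 := by
    rw [← inner_gradient_eq_fderiv]; exact hτ
  -- the unit-norm fact in derivative form
  have hnorm1 : ∀ y ∈ V, σ y = 0 → fderiv ℝ σ y (g y) = 1 := by
    intro y hy h0
    have h1 : ‖g y‖ = 1 := hgrad y (hfr y hy h0)
    have h2 : ⟪g y, g y⟫ = fderiv ℝ σ y (g y) := inner_gradient_eq_fderiv σ y (g y)
    rw [← h2, real_inner_self_eq_norm_sq, h1]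
    norm_num
  -- Step 1: tangential derivative of ‖∇σ‖² vanishes on the boundary
  have step1 : ∀ y ∈ V, σ y = 0 → ∀ v : E n, fderiv ℝ σ y v = 0 →
      D2 y v (g y) = 0 := by
    intro y hy h0 v hv
    have hφd : HasFDerivAt (fun z => fderiv ℝ σ z (g z))
        ((fderiv ℝ σ y).comp (L.comp (D2 y)) + (D2 y).flip (g y)) y :=
      (hF2 y (hVU y hy)).clm_apply (hFg y (hVU y hy))
    have hvan : ∀ z ∈ V, σ z = σ y → (fun z => fderiv ℝ σ z (g z) - 1) z = 0 := by
      intro z hz hσz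
      have := hnorm1 z hz (by rw [hσz, h0])
      simp [this]
    have h0' := tangent_fderiv_eq_zero (hVopen.mem_nhds hy) (hσat y (hVU y hy))
      (hVne y hy) ((hφd.sub_const 1).differentiableAt) hvan hv
    rw [(hφd.sub_const 1).fderiv] at h0'
    simp only [ContinuousLinearMap.add_apply, ContinuousLinearMap.coe_comp',
      Function.comp_apply, ContinuousLinearMap.flip_apply] at h0'
    have hfirst : fderiv ℝ σ y (L (D2 y v)) = D2 y v (g y) := by
      rw [← inner_gradient_eq_fderiv σ y, real_inner_comm]
      exact LcMap_inner _ _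
    rw [hfirst] at h0'
    linarith
  -- Step 1': the combination f₂ vanishes on the boundary near x
  have step1' : ∀ y ∈ V, σ y = 0 →
      D2 y τ (g y) - D2 y (g y) (g y) * fderiv ℝ σ y τ = 0 := by
    intro y hy h0
    set cc : ℝ := fderiv ℝ σ y τ with hcc
    have hv : fderiv ℝ σ y (τ - cc • g y) = 0 := by
      rw [map_sub, map_smul, hnorm1 y hy h0]
      simp [hcc]
    have h1 := step1 y hy h0 _ hv
    rw [map_sub, map_smul] at h1
    simp only [ContinuousLinearMap.sub_apply, ContinuousLinearMap.smul_apply,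
      smul_eq_mul] at h1
    linarith
  -- Step 2: differentiate f₂ at x in the direction τ
  have ht1 : HasFDerivAt (fun y => D2 y τ (g y))
      ((D2 x τ).comp (L.comp (D2 x)) +
        ((D2 x).comp (0 : E n →L[ℝ] E n) + D3.flip τ).flip (g x)) x :=
    (hF3.clm_apply (hasFDerivAt_const τ x)).clm_apply (hFg x hxU)
  have ht2a : HasFDerivAt (fun y => D2 y (g y) (g y))
      ((D2 x (g x)).comp (L.comp (D2 x)) +
        ((D2 x).comp (L.comp (D2 x)) + D3.flip (g x)).flip (g x)) x :=
    (hF3.clm_apply (hFg x hxU)).clm_apply (hFg x hxU)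
  have ht2b : HasFDerivAt (fun y => fderiv ℝ σ y τ)
      ((fderiv ℝ σ x).comp (0 : E n →L[ℝ] E n) + (D2 x).flip τ) x :=
    (hF2 x hxU).clm_apply (hasFDerivAt_const τ x)
  have ht2 := ht2a.mul ht2b
  have htf2 := ht1.sub ht2
  have hvan2 : ∀ z ∈ V, σ z = σ x →
      (fun y => D2 y τ (g y) - D2 y (g y) (g y) * fderiv ℝ σ y τ) z = 0 := by
    intro z hz hσz
    exact step1' z hz (by rw [hσz, hσx0])
  have h0 := tangent_fderiv_eq_zero hVx (hσat x hxU) hD1x htf2.differentiableAt hvan2 hτ'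
  rw [htf2.fderiv] at h0
  simp only [ContinuousLinearMap.sub_apply, ContinuousLinearMap.add_apply,
    ContinuousLinearMap.coe_comp', Function.comp_apply, ContinuousLinearMap.flip_apply,
    ContinuousLinearMap.smul_apply, ContinuousLinearMap.zero_apply, map_zero,
    ContinuousLinearMap.comp_zero, smul_eq_mul, hτ'] at h0
  -- h0 should now say:
  -- D2 x τ (L (D2 x τ)) + D3 τ τ (g x) - D2 x (g x) (g x) * D2 x τ τ = 0 (up to arrangement)
  -- Rewrite the goal
  have hgoalL : ⟪gradient (fun y => Hess σ y τ τ) x, gradient σ x⟫ = D3 (g x) τ τ := by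
    rw [inner_gradient_eq_fderiv]
    have hev : (fun y => Hess σ y τ τ) =ᶠ[𝓝 x] fun y => D2 y τ τ := by
      filter_upwards [hUx] with z hz using hHess z hz τ τ
    rw [hev.fderiv_eq]
    rw [((hF3.clm_apply (hasFDerivAt_const τ x)).clm_apply (hasFDerivAt_const τ x)).fderiv]
    simp
    rfl
  have hgradfd : fderiv ℝ (fun y => gradient σ y) x τ = L (D2 x τ) := by
    rw [(hFg x hxU).fderiv]
    simp
  rw [hgoalL, hHess x hxU τ τ, hHess x hxU (gradient σ x) (gradient σ x), hgradfd,
    hHess x hxU τ (L (D2 x τ))]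
  have hs : D3 (g x) τ τ = D3 τ τ (g x) := by
    rw [hsym12 (g x) τ τ, hsym23 τ (g x) τ]
  rw [hs]
  linarith [h0]
end

section
/- Let σ be a C² negative function on an open set U ⊂ ℝⁿ satisfying H_σ(ξ,ξ)(x) ≥ −C₁σ²(x)‖ξ‖² − C₂|⟨∇σ(x),ξ⟩|²/‖∇σ(x)‖² on U (with ∇σ ≠ 0 there). Then for suitable constants α, β > 0 (depending on C₁, C₂, sup_U‖x‖² and inf_U‖∇σ‖²), the function σ̃(x) = σ(x) + (α + β‖x‖²)σ²(x) satisfies H_{σ̃}(ξ,ξ)(x) ≥ 0 for all x in a neighborhood W ⊆ U on which 0 ≤ 1 + 2(α+β‖x‖²)σ(x) ≤ 2, and all ξ ∈ ℝⁿ; explicitly one may take β ≥ 2C₁ and α ≥ 7β·sup_U‖x‖² + C₂/inf_U‖∇σ‖². -/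
/-!
With `φ = α + β‖x‖²` and `d = dσ(x) ξ`, the Hessian of `σ̃ = σ + φσ²` is
`(1 + 2φσ) H_σ(ξ,ξ) + 2φ d² + 8βσ⟪x,ξ⟫ d + 2βσ²‖ξ‖²`.
As `0 ≤ 1 + 2φσ ≤ 2` and the assumed lower bound `-C₁σ²‖ξ‖² - (C₂/m₂) d²` of `H_σ` is
nonpositive, the first term is at least twice that bound. AM-GM absorbs the cross term into
`βσ²‖ξ‖² + 16β‖x‖² d²`, leaving `(β - 2C₁)σ²‖ξ‖² + 2(φ - 8β‖x‖² - C₂/m₂) d² ≥ 0`.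
-/

open RealInnerProductSpace Metric Bornology

open Filter Topology

section Hessian

variable {F : Type*} [NormedAddCommGroup F] [NormedSpace ℝ F] {f g : F → ℝ} {x : F}

theorem ContDiffAt.differentiableAt_fderiv_apply (hf : ContDiffAt ℝ 2 f x) (ζ : F) :
    DifferentiableAt ℝ (fun y => fderiv ℝ f y ζ) x :=
  ((hf.fderiv_right (m := 1) le_rfl).differentiableAt one_ne_zero).clm_apply
    (differentiableAt_const ζ)

theorem ContDiffAt.eventually_differentiableAt (hf : ContDiffAt ℝ 2 f x) :
    ∀ᶠ y in 𝓝 x, DifferentiableAt ℝ f y :=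
  (hf.eventually (by simp)).mono fun _ hy => hy.differentiableAt two_ne_zero

theorem Hess_add (hf : ContDiffAt ℝ 2 f x) (hg : ContDiffAt ℝ 2 g x) (ξ ζ : F) :
    Hess (fun y => f y + g y) x ξ ζ = Hess f x ξ ζ + Hess g x ξ ζ := by
  have hfg : (fun y => fderiv ℝ (fun y => f y + g y) y ζ) =ᶠ[𝓝 x]
      fun y => fderiv ℝ f y ζ + fderiv ℝ g y ζ := by
    filter_upwards [hf.eventually_differentiableAt, hg.eventually_differentiableAt]
      with y hfy hgy
    rw [fderiv_fun_add hfy hgy, add_apply]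
  rw [Hess, hfg.fderiv_eq, fderiv_fun_add (hf.differentiableAt_fderiv_apply ζ)
    (hg.differentiableAt_fderiv_apply ζ)]
  rfl

theorem Hess_mul (hf : ContDiffAt ℝ 2 f x) (hg : ContDiffAt ℝ 2 g x) (ξ ζ : F) :
    Hess (fun y => f y * g y) x ξ ζ = f x * Hess g x ξ ζ + fderiv ℝ f x ξ * fderiv ℝ g x ζ
      + fderiv ℝ f x ζ * fderiv ℝ g x ξ + g x * Hess f x ξ ζ := by
  have hfg : (fun y => fderiv ℝ (fun y => f y * g y) y ζ) =ᶠ[𝓝 x]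
      fun y => f y * fderiv ℝ g y ζ + g y * fderiv ℝ f y ζ := by
    filter_upwards [hf.eventually_differentiableAt, hg.eventually_differentiableAt]
      with y hfy hgy
    rw [fderiv_fun_mul hfy hgy]
    simp only [add_apply, smul_apply, smul_eq_mul]
  have hdf := (hf.differentiableAt two_ne_zero).hasFDerivAt
  have hdg := (hg.differentiableAt two_ne_zero).hasFDerivAt
  rw [Hess, hfg.fderiv_eq, ((hdf.fun_mul (hg.differentiableAt_fderiv_apply ζ).hasFDerivAt).fun_add
    (hdg.fun_mul (hf.differentiableAt_fderiv_apply ζ).hasFDerivAt)).fderiv]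
  simp only [Hess, add_apply, smul_apply, smul_eq_mul]
  ring

end Hessian

section InnerProduct

variable {F : Type*} [NormedAddCommGroup F] [InnerProductSpace ℝ F]

theorem fderiv_const_add_mul_norm_sq_apply (α β : ℝ) (x ξ : F) :
    fderiv ℝ (fun y => α + β * ‖y‖ ^ 2) x ξ = 2 * β * ⟪x, ξ⟫ := by
  rw [((((hasStrictFDerivAt_norm_sq x).hasFDerivAt).const_mul β).const_add α).fderiv]
  simp only [smul_apply, coe_innerSL_apply, nsmul_eq_mul, Nat.cast_ofNat, smul_eq_mul]
  ring

theorem Hess_const_add_mul_norm_sq (α β : ℝ) (x ξ ζ : F) :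
    Hess (fun y => α + β * ‖y‖ ^ 2) x ξ ζ = 2 * β * ⟪ξ, ζ⟫ := by
  have hlin : (fun y => fderiv ℝ (fun y => α + β * ‖y‖ ^ 2) y ζ) = ⇑((2 * β) • innerSL ℝ ζ) := by
    ext y
    rw [fderiv_const_add_mul_norm_sq_apply]
    simp [real_inner_comm]
  rw [Hess, hlin, ContinuousLinearMap.fderiv]
  simp [real_inner_comm]

theorem Hess_add_mul_norm_sq_mul_sq {f : F → ℝ} {x : F} (hf : ContDiffAt ℝ 2 f x)
    (α β : ℝ) (ξ : F) :
    Hess (fun y => f y + (α + β * ‖y‖ ^ 2) * f y ^ 2) x ξ ξ =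
      (1 + 2 * (α + β * ‖x‖ ^ 2) * f x) * Hess f x ξ ξ
        + 2 * (α + β * ‖x‖ ^ 2) * fderiv ℝ f x ξ ^ 2
        + 8 * β * f x * ⟪x, ξ⟫ * fderiv ℝ f x ξ + 2 * β * f x ^ 2 * ‖ξ‖ ^ 2 := by
  have hsq : (fun y => f y + (α + β * ‖y‖ ^ 2) * f y ^ 2) =
      fun y => f y + (α + β * ‖y‖ ^ 2) * (f y * f y) := by
    funext y; ring
  have hw : ContDiffAt ℝ 2 (fun y : F => α + β * ‖y‖ ^ 2) x :=
    contDiffAt_const.add (contDiffAt_const.mul (contDiff_norm_sq ℝ).contDiffAt)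
  have hf1 := hf.differentiableAt two_ne_zero
  rw [hsq, Hess_add hf (hw.mul (hf.mul hf)), Hess_mul hw (hf.mul hf), Hess_mul hf hf,
    Hess_const_add_mul_norm_sq, fderiv_const_add_mul_norm_sq_apply, fderiv_fun_mul hf1 hf1]
  simp only [add_apply, smul_apply, smul_eq_mul, real_inner_self_eq_norm_sq]
  ring

theorem abs_eight_mul_mul_inner_mul_le (s d : ℝ) (x ξ : F) :
    |8 * s * ⟪x, ξ⟫ * d| ≤ s ^ 2 * ‖ξ‖ ^ 2 + 16 * ‖x‖ ^ 2 * d ^ 2 := by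
  have hp := abs_real_inner_le_norm x ξ
  calc |8 * s * ⟪x, ξ⟫ * d| = 8 * |s| * |⟪x, ξ⟫| * |d| := by
        simp only [abs_mul, abs_of_pos (by norm_num : (0 : ℝ) < 8)]
    _ ≤ 8 * |s| * (‖x‖ * ‖ξ‖) * |d| := by gcongr
    _ ≤ s ^ 2 * ‖ξ‖ ^ 2 + 16 * ‖x‖ ^ 2 * d ^ 2 := by
        nlinarith [sq_nonneg (|s| * ‖ξ‖ - 4 * ‖x‖ * |d|), sq_abs s, sq_abs d]

end InnerProduct

theorem two_mul_le_mul_of_mem_Icc {t a b : ℝ} (ht : t ∈ Set.Icc (0 : ℝ) 2) (ha : a ≤ 0)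
    (hab : a ≤ b) : 2 * a ≤ t * b :=
  calc 2 * a ≤ t * a := mul_le_mul_of_nonpos_right ht.2 ha
    _ ≤ t * b := mul_le_mul_of_nonneg_left hab ht.1

theorem quadratic_negativity_to_convexity_general
    {n : ℕ} (U : Set (E n)) (hU : IsOpen U) (σ : E n → ℝ) (hσ : ContDiffOn ℝ 2 σ U)
    (C₁ C₂ : ℝ) (hC₁ : 0 < C₁) (hC₂ : 0 < C₂)
    (hbound : ∀ x ∈ U, ∀ ξ : E n,
      -(C₁ * (σ x) ^ 2 * ‖ξ‖ ^ 2)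
        - C₂ * ⟪gradient σ x, ξ⟫ ^ 2 / ‖gradient σ x‖ ^ 2 ≤ Hess σ x ξ ξ)
    (m₁ m₂ : ℝ) (hm₁ : ∀ x ∈ U, ‖x‖ ^ 2 ≤ m₁)
    (hm₂ : 0 < m₂) (hm₂' : ∀ x ∈ U, m₂ ≤ ‖gradient σ x‖ ^ 2)
    (α β : ℝ) (hβ0 : 0 < β)
    (hβ : 2 * C₁ ≤ β) (hα : 7 * β * m₁ + C₂ / m₂ ≤ α)
    (σt : E n → ℝ) (hσt : ∀ y, σt y = σ y + (α + β * ‖y‖ ^ 2) * (σ y) ^ 2)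
    (W : Set (E n)) (hW : W ⊆ U)
    (hWcond : ∀ x ∈ W, 0 ≤ 1 + 2 * (α + β * ‖x‖ ^ 2) * σ x ∧
      1 + 2 * (α + β * ‖x‖ ^ 2) * σ x ≤ 2) :
    ∀ x ∈ W, ∀ ξ : E n, 0 ≤ Hess σt x ξ ξ := by
  intro x hxW ξ
  have hxU := hW hxW
  have hσx : ContDiffAt ℝ 2 σ x := (hσ x hxU).contDiffAt (hU.mem_nhds hxU)
  rw [show σt = _ from funext hσt, Hess_add_mul_norm_sq_mul_sq hσx]
  set d := fderiv ℝ σ x ξ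
  have hlower : -(C₁ * σ x ^ 2 * ‖ξ‖ ^ 2) - C₂ / m₂ * d ^ 2 ≤ Hess σ x ξ ξ := by
    have hgrad : C₂ * d ^ 2 / ‖gradient σ x‖ ^ 2 ≤ C₂ / m₂ * d ^ 2 := by
      rw [div_mul_eq_mul_div]
      exact div_le_div_of_nonneg_left (by positivity) hm₂ (hm₂' x hxU)
    have hσ_bound := hbound x hxU ξ
    rw [inner_gradient_left] at hσ_bound
    linarith
  have hlower_nonpos : -(C₁ * σ x ^ 2 * ‖ξ‖ ^ 2) - C₂ / m₂ * d ^ 2 ≤ 0 := by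
    linarith [show 0 ≤ C₁ * σ x ^ 2 * ‖ξ‖ ^ 2 by positivity,
      show 0 ≤ C₂ / m₂ * d ^ 2 by positivity]
  have hfirst := two_mul_le_mul_of_mem_Icc (hWcond x hxW) hlower_nonpos hlower
  have hcross := neg_le_of_abs_le (abs_eight_mul_mul_inner_mul_le (σ x) d x ξ)
  have hweight : 8 * β * ‖x‖ ^ 2 + C₂ / m₂ ≤ α + β * ‖x‖ ^ 2 := by
    linarith [mul_le_mul_of_nonneg_left (hm₁ x hxU) hβ0.le]
  linarith [mul_nonneg (sub_nonneg.2 hβ) (by positivity : 0 ≤ σ x ^ 2 * ‖ξ‖ ^ 2),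
    mul_nonneg (sub_nonneg.2 hweight) (sq_nonneg d), mul_le_mul_of_nonneg_left hcross hβ0.le]

/-- quadratic negativity implies convexity of the modified function
`σ̃(x) = σ(x) + (α + β‖x‖²)σ²(x)` for `β ≥ 2C₁` and `α ≥ 7β·sup‖x‖² + C₂/inf‖∇σ‖²`,
at points where `0 ≤ 1 + 2(α+β‖x‖²)σ(x) ≤ 2`. -/
theorem quadratic_negativity_to_convexity
    {n : ℕ} (U : Set (E n)) (hU : IsOpen U) (σ : E n → ℝ) (hσ : ContDiffOn ℝ 2 σ U)
    (hneg : ∀ x ∈ U, σ x < 0) (hgradne : ∀ x ∈ U, gradient σ x ≠ 0)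
    (C₁ C₂ : ℝ) (hC₁ : 0 < C₁) (hC₂ : 0 < C₂)
    (hbound : ∀ x ∈ U, ∀ ξ : E n,
      -(C₁ * (σ x) ^ 2 * ‖ξ‖ ^ 2)
        - C₂ * ⟪gradient σ x, ξ⟫ ^ 2 / ‖gradient σ x‖ ^ 2 ≤ Hess σ x ξ ξ)
    (m₁ m₂ : ℝ) (hm₁ : ∀ x ∈ U, ‖x‖ ^ 2 ≤ m₁)
    (hm₂ : 0 < m₂) (hm₂' : ∀ x ∈ U, m₂ ≤ ‖gradient σ x‖ ^ 2)
    (α β : ℝ) (hα0 : 0 < α) (hβ0 : 0 < β)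
    (hβ : 2 * C₁ ≤ β) (hα : 7 * β * m₁ + C₂ / m₂ ≤ α)
    (σt : E n → ℝ) (hσt : ∀ y, σt y = σ y + (α + β * ‖y‖ ^ 2) * (σ y) ^ 2)
    (W : Set (E n)) (hW : W ⊆ U) (hWopen : IsOpen W)
    (hWcond : ∀ x ∈ W, 0 ≤ 1 + 2 * (α + β * ‖x‖ ^ 2) * σ x ∧
      1 + 2 * (α + β * ‖x‖ ^ 2) * σ x ≤ 2) :
    ∀ x ∈ W, ∀ ξ : E n, 0 ≤ Hess σt x ξ ξ :=
  quadratic_negativity_to_convexity_general U hU σ hσ C₁ C₂ hC₁ hC₂ hbound m₁ m₂ hm₁ hm₂ hm₂' α β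
    hβ0 hβ hα σt hσt W hW hWcond
end

section
/- Let δ be a smooth negative function on an open set V ⊂ ℝⁿ with ‖∇δ(x)‖ = 1 for all x ∈ V. Then −log(−δ) is convex on V if and only if δ is convex on V. -/
open RealInnerProductSpace Metric Bornology

open InnerProductSpace

lemma fderiv_eq_inner {n : ℕ} (δ : E n → ℝ) (y ξ : E n) :
    fderiv ℝ δ y ξ = ⟪gradient δ y, ξ⟫ := by
  rw [gradient, toDual_symm_apply]

lemma hasFDerivAt_fderiv_apply {n : ℕ} {δ : E n → ℝ} {x : E n}
    (h : ContDiffAt ℝ (⊤ : ℕ∞) δ x) (ζ : E n) :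
    HasFDerivAt (fun y => fderiv ℝ δ y ζ)
      ((ContinuousLinearMap.apply ℝ ℝ ζ).comp (fderiv ℝ (fderiv ℝ δ) x)) x := by
  have hd : DifferentiableAt ℝ (fderiv ℝ δ) x :=
    (h.fderiv_right (m := 1) (WithTop.coe_le_coe.2 le_top)).differentiableAt one_ne_zero
  exact (ContinuousLinearMap.apply ℝ ℝ ζ).hasFDerivAt.comp x hd.hasFDerivAt

lemma hess_eq_snd {n : ℕ} {δ : E n → ℝ} {x : E n}
    (h : ContDiffAt ℝ (⊤ : ℕ∞) δ x) (ξ ζ : E n) :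
    Hess δ x ξ ζ = fderiv ℝ (fderiv ℝ δ) x ξ ζ := by
  rw [Hess, (hasFDerivAt_fderiv_apply h ζ).fderiv]; rfl

lemma hess_symm {n : ℕ} {δ : E n → ℝ} {x : E n}
    (h : ContDiffAt ℝ (⊤ : ℕ∞) δ x) (ξ ζ : E n) :
    Hess δ x ξ ζ = Hess δ x ζ ξ := by
  rw [hess_eq_snd h, hess_eq_snd h]
  exact h.isSymmSndFDerivAt (by
    rw [minSmoothness_of_isRCLikeNormedField]; exact WithTop.coe_le_coe.2 (le_top (a := 2))) ξ ζ

/-- for a smooth negative function `δ` with unit gradient,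
`−log(−δ)` is convex on `V` if and only if `δ` is convex on `V`. -/
theorem log_convexity_iff_convexity
    {n : ℕ} (V : Set (E n)) (hV : IsOpen V) (δ : E n → ℝ) (hδ : ContDiffOn ℝ (⊤ : ℕ∞) δ V)
    (hneg : ∀ x ∈ V, δ x < 0) (hgrad : ∀ x ∈ V, ‖gradient δ x‖ = 1) :
    (∀ x ∈ V, ∀ ξ : E n, 0 ≤ Hess (fun y => -Real.log (-δ y)) x ξ ξ) ↔
    (∀ x ∈ V, ∀ ξ : E n, 0 ≤ Hess δ x ξ ξ) := by
  have hca : ∀ x ∈ V, ContDiffAt ℝ (⊤ : ℕ∞) δ x := fun x hx => hδ.contDiffAt (hV.mem_nhds hx)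
  have hda : ∀ x ∈ V, DifferentiableAt ℝ δ x := fun x hx =>
    (hca x hx).differentiableAt (by simp)
  -- the second derivative
  set D : E n → (E n →L[ℝ] (E n →L[ℝ] ℝ)) := fun x => fderiv ℝ (fderiv ℝ δ) x with hD
  -- key orthogonality: D x ξ (∇δ x) = 0
  have horth : ∀ x ∈ V, ∀ ξ : E n, D x ξ (gradient δ x) = 0 := by
    intro x hx ξ
    set g := gradient δ x with hg
    have hmax : IsLocalMax (fun y => fderiv ℝ δ y g) x := by
      filter_upwards [hV.mem_nhds hx] with y hy
      rw [fderiv_eq_inner, fderiv_eq_inner]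
      calc ⟪gradient δ y, g⟫ ≤ ‖gradient δ y‖ * ‖g‖ := real_inner_le_norm _ _
        _ = 1 := by rw [hgrad y hy, hgrad x hx]; ring
        _ = ⟪gradient δ x, g⟫ := by
            rw [← hg, real_inner_self_eq_norm_sq, hgrad x hx]; norm_num
    have h0 := hmax.hasFDerivAt_eq_zero (hasFDerivAt_fderiv_apply (hca x hx) g)
    have := congrArg (fun L => L ξ) h0
    simpa using this
  -- composition formula for the Hessian of -log(-δ)
  have hcomp : ∀ x ∈ V, ∀ ξ : E n,
      Hess (fun y => -Real.log (-δ y)) x ξ ξ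
        = (-(δ x))⁻¹ * Hess δ x ξ ξ + (δ x)⁻¹^2 * (fderiv ℝ δ x ξ)^2 := by
    intro x hx ξ
    -- first derivative of f on V
    have hf' : ∀ y ∈ V, fderiv ℝ (fun z => -Real.log (-δ z)) y
        = (-(δ y))⁻¹ • fderiv ℝ δ y := by
      intro y hy
      have h1 : HasFDerivAt (fun z => -δ z) (-(fderiv ℝ δ y)) y := (hda y hy).hasFDerivAt.neg
      have hne : -δ y ≠ 0 := by have := hneg y hy; intro h; linarith [neg_eq_zero.1 h]
      have h2 : HasFDerivAt (fun z => -Real.log (-δ z)) (-((-δ y)⁻¹ • -fderiv ℝ δ y)) y := (h1.log hne).neg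
      have : HasFDerivAt (fun z => -Real.log (-δ z)) ((-(δ y))⁻¹ • fderiv ℝ δ y) y := by
        convert h2 using 1
        simp [smul_neg]
      exact this.fderiv
    -- hence the relevant directional derivative functions agree near x
    have heq : (fun y => fderiv ℝ (fun z => -Real.log (-δ z)) y ξ)
        =ᶠ[nhds x] (fun y => (-(δ y))⁻¹ * fderiv ℝ δ y ξ) := by
      filter_upwards [hV.mem_nhds hx] with y hy
      rw [hf' y hy]; rfl
    have hne : -δ x ≠ 0 := by have := hneg x hx; intro h; linarith [neg_eq_zero.1 h]
    -- derivative of y ↦ (-(δ y))⁻¹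
    have ha : HasFDerivAt (fun y => (-(δ y))⁻¹)
        ((-((-δ x)^2)⁻¹) • (-(fderiv ℝ δ x))) x :=
      (hasDerivAt_inv hne).comp_hasFDerivAt x (hda x hx).hasFDerivAt.neg
    have hb := hasFDerivAt_fderiv_apply (hca x hx) ξ
    have hmul : HasFDerivAt (fun y => (-(δ y))⁻¹ * fderiv ℝ δ y ξ) _ x := ha.mul hb
    rw [Hess, heq.fderiv_eq, hmul.fderiv]
    have h5 : δ x ≠ 0 := (hneg x hx).ne
    simp only [ContinuousLinearMap.add_apply, ContinuousLinearMap.smul_apply,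
      ContinuousLinearMap.comp_apply, ContinuousLinearMap.apply_apply,
      ContinuousLinearMap.neg_apply, smul_eq_mul]
    rw [hess_eq_snd (hca x hx)]
    rw [neg_sq, ← inv_pow]
    ring
  constructor
  · -- convexity of -log(-δ) implies convexity of δ
    intro H x hx ξ
    set g := gradient δ x with hg
    set c := fderiv ℝ δ x ξ with hc
    set ξ' := ξ - c • g with hξ'
    have hgone : ⟪g, g⟫ = 1 := by
      rw [real_inner_self_eq_norm_sq, hgrad x hx]; norm_num
    have hd0 : fderiv ℝ δ x ξ' = 0 := by
      rw [hξ', map_sub, map_smul, hc, fderiv_eq_inner δ x ξ, fderiv_eq_inner δ x g, ← hg, hgone]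
      simp
    have hhess : Hess δ x ξ' ξ' = Hess δ x ξ ξ := by
      have hDg : ∀ ζ : E n, D x ζ g = 0 := fun ζ => horth x hx ζ
      have hgD : ∀ ζ : E n, D x g ζ = 0 := by
        intro ζ
        have := hess_symm (hca x hx) g ζ
        rw [hess_eq_snd (hca x hx), hess_eq_snd (hca x hx)] at this
        rw [this, hDg]
      rw [hess_eq_snd (hca x hx), hess_eq_snd (hca x hx)]
      rw [hξ']
      simp only [map_sub, map_smul, ContinuousLinearMap.sub_apply,
        ContinuousLinearMap.smul_apply, smul_eq_mul]
      rw [hDg ξ, hgD]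
      simp only [mul_zero, sub_zero, smul_eq_mul]
      have h7 := hgD g
      simp only [hD] at h7
      rw [h7]
      ring
    have hthis := H x hx ξ'
    rw [hcomp x hx ξ', hd0, hhess] at hthis
    have hne' : -δ x ≠ 0 := by have := hneg x hx; intro h; linarith [neg_eq_zero.1 h]
    have h6 : (0:ℝ) ≤ (-δ x) * ((-δ x)⁻¹ * Hess δ x ξ ξ) := by
      apply mul_nonneg (by linarith [hneg x hx])
      have : ((δ x)⁻¹^2 * (0:ℝ)^2) = 0 := by ring
      linarith [hthis]
    rwa [← mul_assoc, mul_inv_cancel₀ hne', one_mul] at h6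
  · -- convexity of δ implies convexity of -log(-δ)
    intro H x hx ξ
    rw [hcomp x hx ξ]
    have h1 : 0 < (-δ x)⁻¹ := inv_pos.2 (by linarith [hneg x hx])
    have h2 := H x hx ξ
    exact add_nonneg (mul_nonneg h1.le h2) (mul_nonneg (sq_nonneg _) (sq_nonneg _))
end
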